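/- arXiv:1112.6074 — 10 statements merged into one kernel-verified Lean document; each statement's English description precedes it below -/
import Mathlib

section
/- Let λ be a partition and let i ≥ 1 satisfy i = 1 or λ_i < λ_{i−1}, so that λ+1_i (the sequence obtained from λ by replacing λ_i by λ_i+1) is again a partition. Assume every factor occurring in a denominator below is nonzero in K. Then (c'_{λ+1_i}/c'_λ) · (c_λ/c_{λ+1_i}) · A^+_{λ,i} = −q · A^-_{λ+1_i,i}. -/
open Finset

noncomputable section

/-- The conjugate partition value `λ'_j`, computed using rows `1,…,L`
(correct whenever `L ≥ ℓ(λ)`). -/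
def conjP (lam : ℕ → ℕ) (L j : ℕ) : ℕ :=
  ((Finset.Icc 1 L).filter (fun k => j ≤ lam k)).card

/-- `c_λ = ∏_{s∈λ} (1 - q^{a_λ(s)} t^{l_λ(s)+1})`, computed using rows `1,…,L`. -/
def cP {K : Type*} [Field K] (q t : K) (lam : ℕ → ℕ) (L : ℕ) : K :=
  ∏ i ∈ Finset.Icc 1 L, ∏ j ∈ Finset.Icc 1 (lam i),
    (1 - q ^ ((lam i : ℤ) - (j : ℤ)) * t ^ ((conjP lam L j : ℤ) - (i : ℤ) + 1))

/-- `c'_λ = ∏_{s∈λ} (1 - q^{a_λ(s)+1} t^{l_λ(s)})`, computed using rows `1,…,L`. -/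
def cP' {K : Type*} [Field K] (q t : K) (lam : ℕ → ℕ) (L : ℕ) : K :=
  ∏ i ∈ Finset.Icc 1 L, ∏ j ∈ Finset.Icc 1 (lam i),
    (1 - q ^ ((lam i : ℤ) - (j : ℤ) + 1) * t ^ ((conjP lam L j : ℤ) - (i : ℤ)))

/-- `A^+_{λ,i}`. -/
def Aplus {K : Type*} [Field K] (q t : K) (lam : ℕ → ℕ) (i : ℕ) : K :=
  (1 - t) * ∏ j ∈ Finset.Icc 1 (i - 1),
    ((1 - q ^ ((lam i : ℤ) - (lam j : ℤ)) * t ^ ((j : ℤ) - (i : ℤ) + 1)) *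
      (1 - q ^ ((lam i : ℤ) - (lam j : ℤ) + 1) * t ^ ((j : ℤ) - (i : ℤ) - 1))) /
    ((1 - q ^ ((lam i : ℤ) - (lam j : ℤ)) * t ^ ((j : ℤ) - (i : ℤ))) *
      (1 - q ^ ((lam i : ℤ) - (lam j : ℤ) + 1) * t ^ ((j : ℤ) - (i : ℤ))))

/-- `A^-_{λ,i}`, with the product taken over `j = i+1,…,L` (correct whenever `L ≥ ℓ(λ)`). -/
def Aminus {K : Type*} [Field K] (q t : K) (lam : ℕ → ℕ) (L i : ℕ) : K :=
  (1 - t⁻¹) *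
    ((1 - q ^ ((lam (i + 1) : ℤ) - (lam i : ℤ))) /
      (1 - q ^ ((lam (i + 1) : ℤ) - (lam i : ℤ) + 1) * t⁻¹)) *
    ∏ j ∈ Finset.Icc (i + 1) L,
      ((1 - q ^ ((lam j : ℤ) - (lam i : ℤ) + 1) * t ^ ((i : ℤ) - (j : ℤ) - 1)) *
        (1 - q ^ ((lam (j + 1) : ℤ) - (lam i : ℤ)) * t ^ ((i : ℤ) - (j : ℤ)))) /
      ((1 - q ^ ((lam (j + 1) : ℤ) - (lam i : ℤ) + 1) * t ^ ((i : ℤ) - (j : ℤ) - 1)) *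
        (1 - q ^ ((lam j : ℤ) - (lam i : ℤ)) * t ^ ((i : ℤ) - (j : ℤ))))

/-!
Adding the box `(i, λ_i + 1)` changes the arm or the leg only of the boxes in row `i` and in
column `λ_i + 1`. Hence `c'_{λ+1_i}/c'_λ · c_λ/c_{λ+1_i}` is `(1 - q)/(1 - t)` times a ratio of
column factors and a ratio of row factors. Writing `1 - x = -x (1 - x⁻¹)` factor by factor shows
that `A^+_{λ,i}` is `1 - t` times the inverse of the column ratio. Grouping the boxes `(i, j)` of
row `i` by their leg `λ'_j - i = k - i`, the row ratio telescopes over each block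
`λ_{k+1} < j ≤ λ_k`, leaving a product over the rows `k ≥ i` which, after the same inversion of
factors, is the product defining `-q A^-_{λ+1_i,i}`.
-/

section Conjugate

variable {lam : ℕ → ℕ} {L i : ℕ}

theorem conjP_le (lam : ℕ → ℕ) (L j : ℕ) : conjP lam L j ≤ L :=
  (card_filter_le _ _).trans (by simp)

theorem conjP_eq_of_forall_iff {j n : ℕ} (hn : n ≤ L)
    (h : ∀ k ∈ Icc 1 L, j ≤ lam k ↔ k ≤ n) : conjP lam L j = n := by
  have : (Icc 1 L).filter (fun k => j ≤ lam k) = Icc 1 n := by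
    ext k
    simp only [mem_filter, mem_Icc]
    constructor
    · rintro ⟨hk, hjk⟩
      exact ⟨hk.1, (h k (mem_Icc.2 hk)).1 hjk⟩
    · intro hk
      exact ⟨⟨hk.1, hk.2.trans hn⟩, (h k (mem_Icc.2 ⟨hk.1, hk.2.trans hn⟩)).2 hk.2⟩
  simp [conjP, this]

variable (hanti : AntitoneOn lam (Set.Ici 1)) (hL : ∀ k, L < k → lam k = 0)
include hanti hL

theorem le_conjP_iff {j k : ℕ} (hj : 1 ≤ j) (hk : 1 ≤ k) :
    k ≤ conjP lam L j ↔ j ≤ lam k := by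
  constructor
  · intro hkc
    by_contra hjk
    have hsub : (Icc 1 L).filter (fun m => j ≤ lam m) ⊆ Icc 1 (k - 1) := by
      intro m hm
      simp only [mem_filter, mem_Icc] at hm ⊢
      refine ⟨hm.1.1, ?_⟩
      by_contra hkm
      exact hjk (hm.2.trans (hanti (Set.mem_Ici.2 hk) (Set.mem_Ici.2 hm.1.1) (by omega)))
    have := card_le_card hsub
    simp only [Nat.card_Icc] at this
    unfold conjP at hkc
    omega
  · intro hjk
    have hkL : k ≤ L := by
      by_contra hkL
      have := hL k (by omega)
      omega
    have hsub : Icc 1 k ⊆ (Icc 1 L).filter (fun m => j ≤ lam m) := by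
      intro m hm
      simp only [mem_filter, mem_Icc] at hm ⊢
      exact ⟨⟨hm.1, hm.2.trans hkL⟩, hjk.trans (hanti (Set.mem_Ici.2 hm.1) (Set.mem_Ici.2 hk) hm.2)⟩
    simpa [conjP] using card_le_card hsub

theorem prod_Icc_conjP_eq_prod_Ioc {M : Type*} [CommMonoid M] (G : ℕ → ℕ → M) (hi : 1 ≤ i) :
    ∏ j ∈ Icc 1 (lam i), G j (conjP lam L j) =
      ∏ k ∈ Icc i L, ∏ j ∈ Ioc (lam (k + 1)) (lam k), G j k := by
  have hmaps : ∀ j ∈ Icc 1 (lam i), conjP lam L j ∈ Icc i L := fun j hj => by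
    rw [mem_Icc] at hj ⊢
    exact ⟨(le_conjP_iff hanti hL hj.1 hi).2 hj.2, conjP_le lam L j⟩
  rw [← prod_fiberwise_of_maps_to hmaps]
  refine prod_congr rfl fun k hk => ?_
  rw [mem_Icc] at hk
  have hfiber :
      (Icc 1 (lam i)).filter (fun j => conjP lam L j = k) = Ioc (lam (k + 1)) (lam k) := by
    ext j
    simp only [mem_filter, mem_Icc, mem_Ioc]
    constructor
    · rintro ⟨hj, rfl⟩
      refine ⟨?_, (le_conjP_iff hanti hL hj.1 (by omega)).1 le_rfl⟩
      by_contra hle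
      have := (le_conjP_iff hanti hL hj.1 (by omega : 1 ≤ conjP lam L j + 1)).2 (by omega)
      omega
    · rintro ⟨hj1, hj2⟩
      have hle := (le_conjP_iff hanti hL (by omega : 1 ≤ j) (by omega : 1 ≤ k)).2 hj2
      have hlt : ¬ k + 1 ≤ conjP lam L j := fun h =>
        absurd ((le_conjP_iff hanti hL (by omega : 1 ≤ j) (by omega)).1 h) (by omega)
      exact ⟨⟨by omega, hj2.trans (hanti (Set.mem_Ici.2 hi) (Set.mem_Ici.2 (by omega)) hk.1)⟩,
        by omega⟩
  rw [← hfiber]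
  exact prod_congr rfl fun j hj => by rw [(mem_filter.1 hj).2]

end Conjugate

section AddBox

variable {lam mu : ℕ → ℕ} {L i : ℕ}

theorem conjP_add_box_of_ne (hmui : mu i = lam i + 1) (hmuk : ∀ k, k ≠ i → mu k = lam k)
    {j : ℕ} (hj : j ≠ lam i + 1) : conjP mu L j = conjP lam L j := by
  unfold conjP
  congr 1
  refine filter_congr fun k _ => ?_
  rcases eq_or_ne k i with rfl | hk
  · rw [hmui]; omega
  · rw [hmuk k hk]

variable (hanti : AntitoneOn lam (Set.Ici 1)) (hi : 1 ≤ i) (hadd : i = 1 ∨ lam i < lam (i - 1))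
include hanti hi hadd

theorem succ_le_iff_lt_of_addable {k : ℕ} (hk : 1 ≤ k) : lam i + 1 ≤ lam k ↔ k < i := by
  constructor
  · intro h
    by_contra hik
    have := hanti (Set.mem_Ici.2 hi) (Set.mem_Ici.2 hk) (not_lt.1 hik)
    omega
  · intro hki
    rcases hadd with rfl | hlt
    · omega
    · exact hlt.trans_le (hanti (Set.mem_Ici.2 hk) (Set.mem_Ici.2 (by omega)) (by omega))

theorem conjP_succ_of_addable (hiL : i ≤ L) : conjP lam L (lam i + 1) = i - 1 :=
  conjP_eq_of_forall_iff (by omega) fun k hk => by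
    rw [succ_le_iff_lt_of_addable hanti hi hadd (mem_Icc.1 hk).1]; omega

theorem conjP_add_box_succ (hiL : i ≤ L) (hmui : mu i = lam i + 1)
    (hmuk : ∀ k, k ≠ i → mu k = lam k) : conjP mu L (lam i + 1) = i :=
  conjP_eq_of_forall_iff hiL fun k hk => by
    rcases eq_or_ne k i with rfl | hki
    · simp [hmui]
    · rw [hmuk k hki, succ_le_iff_lt_of_addable hanti hi hadd (mem_Icc.1 hk).1]; omega

end AddBox

section HookProducts

variable {M : Type*} [CommMonoid M]

theorem prod_Icc_eq_prod_mul_mul_prod (f : ℕ → M) {i L : ℕ} (hi : 1 ≤ i) (hiL : i ≤ L) :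
    ∏ k ∈ Icc 1 L, f k = (∏ k ∈ Icc 1 (i - 1), f k) * f i * ∏ k ∈ Icc (i + 1) L, f k := by
  have hico : Icc 1 (i - 1) = Ico 1 i := by ext; simp; omega
  rw [mul_assoc, Icc_add_one_left_eq_Ioc, mul_prod_Ioc_eq_prod_Icc hiL, hico,
    ← Ico_add_one_right_eq_Icc, ← Ico_add_one_right_eq_Icc, prod_Ico_consecutive _ hi (by omega)]

def hookRow (F : ℤ → ℤ → M) (lam : ℕ → ℕ) (L k : ℕ) : M :=
  ∏ j ∈ Icc 1 (lam k), F ((lam k : ℤ) - j) ((conjP lam L j : ℤ) - k)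

def hookProd (F : ℤ → ℤ → M) (lam : ℕ → ℕ) (L : ℕ) : M :=
  ∏ k ∈ Icc 1 L, hookRow F lam L k

/-- The factors of `hookProd F` at the boxes `(k, λ_i + 1)`, `k < i`, whose leg is `i - 1 - k` in
`λ` (`s = 0`) and `i - k` in `λ + 1_i` (`s = 1`). -/
def colProd (F : ℤ → ℤ → M) (lam : ℕ → ℕ) (i : ℕ) (s : ℤ) : M :=
  ∏ k ∈ Icc 1 (i - 1), F ((lam k : ℤ) - lam i - 1) ((i : ℤ) - 1 - k + s)

/-- The factors of `hookProd F` at the boxes `(i, j)`, `j ≤ λ_i`, whose arm is `λ_i - j` in `λ`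
(`s = 0`) and `λ_i + 1 - j` in `λ + 1_i` (`s = 1`). -/
def rowProd (F : ℤ → ℤ → M) (lam : ℕ → ℕ) (L i : ℕ) (s : ℤ) : M :=
  ∏ j ∈ Icc 1 (lam i), F ((lam i : ℤ) - j + s) ((conjP lam L j : ℤ) - i)

variable {lam mu : ℕ → ℕ} {L i : ℕ}

theorem hookRow_eq_mul_prod_erase (F : ℤ → ℤ → M) {nu : ℕ → ℕ} {k : ℕ} (hk : nu k = lam k)
    (hik : lam i + 1 ≤ lam k) (hnu : ∀ j, j ≠ lam i + 1 → conjP nu L j = conjP lam L j) {s : ℤ}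
    (hs : (conjP nu L (lam i + 1) : ℤ) = i - 1 + s) :
    hookRow F nu L k = F ((lam k : ℤ) - lam i - 1) ((i : ℤ) - 1 - k + s) *
      ∏ j ∈ (Icc 1 (lam k)).erase (lam i + 1), F ((lam k : ℤ) - j) ((conjP lam L j : ℤ) - k) := by
  rw [hookRow, hk, ← mul_prod_erase _ _ (mem_Icc.2 ⟨by omega, hik⟩), hs]
  congr 1
  · congr 1 <;> push_cast <;> ring
  · exact prod_congr rfl fun j hj => by rw [hnu j (ne_of_mem_erase hj)]

variable (hanti : AntitoneOn lam (Set.Ici 1)) (hi : 1 ≤ i) (hadd : i = 1 ∨ lam i < lam (i - 1))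
  (hmui : mu i = lam i + 1) (hmuk : ∀ k, k ≠ i → mu k = lam k)
include hanti hi hadd hmui hmuk

theorem hookRow_add_box_self (F : ℤ → ℤ → M) (hiL : i ≤ L) :
    hookRow F mu L i = F 0 0 * rowProd F lam L i 1 := by
  rw [hookRow, hmui, prod_Icc_succ_top (by omega), conjP_add_box_succ hanti hi hadd hiL hmui hmuk,
    mul_comm, rowProd]
  congr 1
  · congr 1 <;> push_cast <;> ring
  · refine prod_congr rfl fun j hj => ?_
    rw [conjP_add_box_of_ne hmui hmuk (by rw [mem_Icc] at hj; omega)]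
    congr 1
    push_cast
    ring

omit hadd in
theorem hookRow_add_box_of_lt (F : ℤ → ℤ → M) {k : ℕ} (hk : i < k) :
    hookRow F mu L k = hookRow F lam L k := by
  have hle := hanti (Set.mem_Ici.2 hi) (Set.mem_Ici.2 (by omega)) hk.le
  rw [hookRow, hookRow, hmuk k hk.ne']
  exact prod_congr rfl fun j hj => by
    rw [conjP_add_box_of_ne hmui hmuk (by rw [mem_Icc] at hj; omega)]

theorem hookProd_add_box (F : ℤ → ℤ → M) (hiL : i ≤ L) :
    ∃ R, hookProd F lam L = R * (colProd F lam i 0 * rowProd F lam L i 0) ∧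
      hookProd F mu L = R * (F 0 0 * colProd F lam i 1 * rowProd F lam L i 1) := by
  have habove : ∀ k ∈ Icc 1 (i - 1), lam i + 1 ≤ lam k := fun k hk => by
    rw [mem_Icc] at hk
    exact (succ_le_iff_lt_of_addable hanti hi hadd hk.1).2 (by omega)
  have hcol (nu : ℕ → ℕ) (hnu_eq : ∀ k ∈ Icc 1 (i - 1), nu k = lam k)
      (hnu : ∀ j, j ≠ lam i + 1 → conjP nu L j = conjP lam L j) (s : ℤ)
      (hs : (conjP nu L (lam i + 1) : ℤ) = i - 1 + s) :
      ∏ k ∈ Icc 1 (i - 1), hookRow F nu L k = colProd F lam i s * ∏ k ∈ Icc 1 (i - 1),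
        ∏ j ∈ (Icc 1 (lam k)).erase (lam i + 1), F ((lam k : ℤ) - j) ((conjP lam L j : ℤ) - k) := by
    rw [colProd, ← prod_mul_distrib]
    exact prod_congr rfl fun k hk =>
      hookRow_eq_mul_prod_erase F (hnu_eq k hk) (habove k hk) hnu hs
  refine ⟨(∏ k ∈ Icc 1 (i - 1), ∏ j ∈ (Icc 1 (lam k)).erase (lam i + 1),
      F ((lam k : ℤ) - j) ((conjP lam L j : ℤ) - k)) * ∏ k ∈ Icc (i + 1) L, hookRow F lam L k,
    ?_, ?_⟩
  · rw [hookProd, prod_Icc_eq_prod_mul_mul_prod _ hi hiL,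
      hcol lam (fun _ _ => rfl) (fun _ _ => rfl) 0
        (by rw [conjP_succ_of_addable hanti hi hadd hiL]; push_cast [hi]; ring)]
    simp only [hookRow, rowProd, add_zero]
    ac_rfl
  · rw [hookProd, prod_Icc_eq_prod_mul_mul_prod _ hi hiL,
      hcol mu (fun k hk => hmuk k (by rw [mem_Icc] at hk; omega))
        (fun _ => conjP_add_box_of_ne hmui hmuk) 1
        (by rw [conjP_add_box_succ hanti hi hadd hiL hmui hmuk]; ring),
      hookRow_add_box_self hanti hi hadd hmui hmuk F hiL,
      prod_congr rfl fun k hk => hookRow_add_box_of_lt hanti hi hmui hmuk F (k := k)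
        (by rw [mem_Icc] at hk; omega)]
    ac_rfl

end HookProducts

section RowTelescope

variable {M : Type*} [CommMonoid M]

theorem prod_Ioc_mul_telescope (u : ℤ → M) (x : ℤ) {b c : ℕ} (h : b ≤ c) :
    (∏ j ∈ Ioc b c, u (x - j + 1)) * u (x - c) = (∏ j ∈ Ioc b c, u (x - j)) * u (x - b) := by
  induction c, h using Nat.le_induction with
  | base => simp
  | succ c hbc ih =>
    rw [prod_Ioc_succ_top hbc, prod_Ioc_succ_top hbc, mul_right_comm _ (u _) (u (x - b)), ← ih,
      show x - ((c + 1 : ℕ) : ℤ) + 1 = x - c by push_cast; ring, mul_right_comm]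

def legProd (F : ℤ → ℤ → M) (lam : ℕ → ℕ) (L i s : ℕ) : M :=
  ∏ k ∈ Icc (i + 1) L, F ((lam i : ℤ) - lam (k + s)) ((k : ℤ) - i)

variable {lam : ℕ → ℕ} {L i : ℕ}

theorem rowProd_mul_legProd (F : ℤ → ℤ → M) (hanti : AntitoneOn lam (Set.Ici 1))
    (hL : ∀ k, L < k → lam k = 0) (hi : 1 ≤ i) (hiL : i ≤ L) :
    rowProd F lam L i 1 * (F 0 0 * legProd F lam L i 0) =
      rowProd F lam L i 0 * (F ((lam i : ℤ) - lam (i + 1)) 0 * legProd F lam L i 1) := by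
  have hrow : ∀ s : ℤ, rowProd F lam L i s =
      ∏ k ∈ Icc i L, ∏ j ∈ Ioc (lam (k + 1)) (lam k), F ((lam i : ℤ) - j + s) ((k : ℤ) - i) :=
    fun s => prod_Icc_conjP_eq_prod_Ioc hanti hL
      (fun j k => F ((lam i : ℤ) - j + s) ((k : ℤ) - i)) hi
  have hsplit : ∀ s : ℕ, ∏ k ∈ Icc i L, F ((lam i : ℤ) - lam (k + s)) ((k : ℤ) - i) =
      F ((lam i : ℤ) - lam (i + s)) 0 * legProd F lam L i s := fun s => by
    rw [legProd, Icc_add_one_left_eq_Ioc, ← mul_prod_Ioc_eq_prod_Icc hiL, sub_self]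
  have := hsplit 0
  simp only [add_zero, sub_self] at this
  rw [← this, ← hsplit 1, hrow, hrow, ← prod_mul_distrib, ← prod_mul_distrib]
  refine prod_congr rfl fun k hk => ?_
  have hk1 := (mem_Icc.1 hk).1
  simpa using prod_Ioc_mul_telescope (fun a => F a ((k : ℤ) - i)) (lam i)
    (hanti (Set.mem_Ici.2 (by omega)) (Set.mem_Ici.2 (by omega)) (Nat.le_succ k))

end RowTelescope

section Factors

variable {K : Type*} [Field K] {q t : K} {lam mu : ℕ → ℕ} {L i : ℕ}

theorem one_sub_zpow_mul_zpow_eq_neg (hq : q ≠ 0) (ht : t ≠ 0) (a b : ℤ) :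
    1 - q ^ a * t ^ b = -(q ^ a * t ^ b) * (1 - q ^ (-a) * t ^ (-b)) := by
  have : q ^ a * t ^ b ≠ 0 := by positivity
  rw [zpow_neg, zpow_neg, ← mul_inv]
  field_simp
  ring

theorem one_sub_zpow_mul_zpow_neg_ne_zero (hq : q ≠ 0) (ht : t ≠ 0) {a b : ℤ}
    (h : 1 - q ^ a * t ^ b ≠ 0) : 1 - q ^ (-a) * t ^ (-b) ≠ 0 := by
  rw [one_sub_zpow_mul_zpow_eq_neg hq ht] at h
  exact right_ne_zero_of_mul h

theorem one_sub_zpow_mul_zpow_div_flip (hq : q ≠ 0) (ht : t ≠ 0) {a₁ b₁ a₂ b₂ a₃ b₃ a₄ b₄ : ℤ}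
    (ha : a₁ + a₂ = a₃ + a₄) (hb : b₁ + b₂ = b₃ + b₄) :
    (1 - q ^ a₁ * t ^ b₁) * (1 - q ^ a₂ * t ^ b₂) /
        ((1 - q ^ a₃ * t ^ b₃) * (1 - q ^ a₄ * t ^ b₄)) =
      (1 - q ^ (-a₁) * t ^ (-b₁)) * (1 - q ^ (-a₂) * t ^ (-b₂)) /
        ((1 - q ^ (-a₃) * t ^ (-b₃)) * (1 - q ^ (-a₄) * t ^ (-b₄))) := by
  simp only [one_sub_zpow_mul_zpow_eq_neg hq ht a₁, one_sub_zpow_mul_zpow_eq_neg hq ht a₂,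
    one_sub_zpow_mul_zpow_eq_neg hq ht a₃, one_sub_zpow_mul_zpow_eq_neg hq ht a₄]
  have hprod : q ^ a₁ * t ^ b₁ * (q ^ a₂ * t ^ b₂) = q ^ a₃ * t ^ b₃ * (q ^ a₄ * t ^ b₄) := by
    rw [mul_mul_mul_comm, ← zpow_add₀ hq, ← zpow_add₀ ht, ha, hb, zpow_add₀ hq, zpow_add₀ ht]
    ring
  rw [mul_mul_mul_comm, mul_mul_mul_comm (-(q ^ a₃ * t ^ b₃)), neg_mul_neg, neg_mul_neg, hprod,
    mul_div_mul_left _ _ (by positivity)]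

def cFactor (q t : K) (a b : ℤ) : K := 1 - q ^ a * t ^ (b + 1)

def cFactor' (q t : K) (a b : ℤ) : K := 1 - q ^ (a + 1) * t ^ b

theorem rowProd_ratio_eq_legProd_ratio (F G : ℤ → ℤ → K) (hanti : AntitoneOn lam (Set.Ici 1))
    (hL : ∀ k, L < k → lam k = 0) (hi : 1 ≤ i) (hiL : i ≤ L) (hG : rowProd G lam L i 0 ≠ 0)
    (hF : rowProd F lam L i 1 ≠ 0) (hFn : F ((lam i : ℤ) - lam (i + 1)) 0 ≠ 0)
    (hFleg : legProd F lam L i 1 ≠ 0) (hGleg : legProd G lam L i 0 ≠ 0) :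
    G 0 0 * (rowProd G lam L i 1 / rowProd G lam L i 0) *
        (rowProd F lam L i 0 / rowProd F lam L i 1) =
      F 0 0 * (G ((lam i : ℤ) - lam (i + 1)) 0 / F ((lam i : ℤ) - lam (i + 1)) 0) *
        (legProd F lam L i 0 * legProd G lam L i 1 /
          (legProd F lam L i 1 * legProd G lam L i 0)) := by
  have hrowG := rowProd_mul_legProd G hanti hL hi hiL
  have hrowF := rowProd_mul_legProd F hanti hL hi hiL
  field_simp
  linear_combination
    rowProd F lam L i 0 * F ((lam i : ℤ) - lam (i + 1)) 0 * legProd F lam L i 1 * hrowG -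
      rowProd G lam L i 0 * G ((lam i : ℤ) - lam (i + 1)) 0 * legProd G lam L i 1 * hrowF

theorem cFactor_zero_zero : cFactor q t 0 0 = 1 - t := by simp [cFactor]

theorem cP_eq_hookProd : cP q t lam L = hookProd (cFactor q t) lam L := rfl

theorem cP'_eq_hookProd : cP' q t lam L = hookProd (cFactor' q t) lam L := rfl

theorem Aplus_eq_colProd (hq : q ≠ 0) (ht : t ≠ 0) :
    Aplus q t lam i = (1 - t) *
      (colProd (cFactor' q t) lam i 0 * colProd (cFactor q t) lam i 1 /
        (colProd (cFactor' q t) lam i 1 * colProd (cFactor q t) lam i 0)) := by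
  rw [Aplus, colProd, colProd, colProd, colProd, ← prod_mul_distrib, ← prod_mul_distrib,
    ← prod_div_distrib]
  congr 1
  refine prod_congr rfl fun k _ => ?_
  rw [one_sub_zpow_mul_zpow_div_flip hq ht (by ring) (by ring)]
  simp only [cFactor, cFactor']
  ring_nf

theorem neg_mul_one_sub_inv_mul_div (hq : q ≠ 0) (ht : t ≠ 0) {e n : ℤ} (h : e = -n - 1) :
    -q * ((1 - t⁻¹) * ((1 - q ^ e) / (1 - q ^ (e + 1) * t⁻¹))) =
      (1 - t) * (cFactor' q t n 0 / cFactor q t n 0) := by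
  have hx : q ^ n * t ≠ 0 := by positivity
  have hden : 1 - q ^ (e + 1) * t⁻¹ = -(q ^ n * t)⁻¹ * cFactor q t n 0 := by
    rw [cFactor, h, show -n - 1 + 1 = -n by ring, zpow_neg, zero_add, zpow_one]
    field_simp
    ring
  have hnum : -q * ((1 - t⁻¹) * (1 - q ^ e)) =
      -(q ^ n * t)⁻¹ * ((1 - t) * cFactor' q t n 0) := by
    rw [cFactor', h, zpow_sub₀ hq, zpow_neg, zpow_add_one₀ hq, zpow_zero]
    field_simp
    ring
  rw [hden, ← mul_div_assoc, ← mul_div_assoc, hnum,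
    mul_div_mul_left _ _ (neg_ne_zero.2 (inv_ne_zero hx)), mul_div_assoc]

theorem neg_mul_Aminus_add_box (hq : q ≠ 0) (ht : t ≠ 0) (hmui : mu i = lam i + 1)
    (hmuk : ∀ k, k ≠ i → mu k = lam k) :
    -q * Aminus q t mu L i =
      (1 - t) * (cFactor' q t ((lam i : ℤ) - lam (i + 1)) 0 /
        cFactor q t ((lam i : ℤ) - lam (i + 1)) 0) *
      (legProd (cFactor q t) lam L i 0 * legProd (cFactor' q t) lam L i 1 /
        (legProd (cFactor q t) lam L i 1 * legProd (cFactor' q t) lam L i 0)) := by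
  rw [Aminus, ← mul_assoc, ← mul_assoc, mul_assoc (-q),
    neg_mul_one_sub_inv_mul_div hq ht (n := (lam i : ℤ) - lam (i + 1))
      (by rw [hmuk (i + 1) (by omega), hmui]; push_cast; ring),
    legProd, legProd, legProd, legProd, ← prod_mul_distrib, ← prod_mul_distrib,
    ← prod_div_distrib]
  congr 1
  refine prod_congr rfl fun j hj => ?_
  have hj := (mem_Icc.1 hj).1
  rw [hmuk j (by omega), hmuk (j + 1) (by omega), hmui,
    one_sub_zpow_mul_zpow_div_flip hq ht (by ring) (by ring)]
  simp only [cFactor, cFactor']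
  push_cast
  ring_nf

theorem colProd_ne_zero (hq : q ≠ 0) (ht : t ≠ 0)
    (h : ∀ j ∈ Icc 1 (i - 1),
      1 - q ^ ((lam i : ℤ) - (lam j : ℤ)) * t ^ ((j : ℤ) - (i : ℤ)) ≠ 0 ∧
      1 - q ^ ((lam i : ℤ) - (lam j : ℤ) + 1) * t ^ ((j : ℤ) - (i : ℤ)) ≠ 0) :
    colProd (cFactor' q t) lam i 1 ≠ 0 ∧ colProd (cFactor q t) lam i 0 ≠ 0 := by
  simp only [colProd, prod_ne_zero_iff, cFactor, cFactor']
  constructor <;> intro k hk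
  · convert one_sub_zpow_mul_zpow_neg_ne_zero hq ht (h k hk).1 using 4 <;> ring
  · convert one_sub_zpow_mul_zpow_neg_ne_zero hq ht (h k hk).2 using 4 <;> ring

theorem legProd_ne_zero (hq : q ≠ 0) (ht : t ≠ 0) (hmui : mu i = lam i + 1)
    (hmuk : ∀ k, k ≠ i → mu k = lam k)
    (h : ∀ j ∈ Icc (i + 1) L,
      1 - q ^ ((mu (j + 1) : ℤ) - (mu i : ℤ) + 1) * t ^ ((i : ℤ) - (j : ℤ) - 1) ≠ 0 ∧
      1 - q ^ ((mu j : ℤ) - (mu i : ℤ)) * t ^ ((i : ℤ) - (j : ℤ)) ≠ 0) :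
    legProd (cFactor q t) lam L i 1 ≠ 0 ∧ legProd (cFactor' q t) lam L i 0 ≠ 0 := by
  simp only [legProd, prod_ne_zero_iff, cFactor, cFactor', add_zero]
  constructor <;> intro k hk
  all_goals
    have hk1 := (mem_Icc.1 hk).1
    have hk' := h k hk
    rw [hmuk k (by omega), hmuk (k + 1) (by omega), hmui] at hk'
  · convert one_sub_zpow_mul_zpow_neg_ne_zero hq ht hk'.1 using 4 <;> push_cast <;> ring
  · convert one_sub_zpow_mul_zpow_neg_ne_zero hq ht hk'.2 using 4 <;> push_cast <;> ring

theorem cFactor_ne_zero_of_add_box (hq : q ≠ 0) (ht : t ≠ 0) (hmui : mu i = lam i + 1)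
    (hmuk : ∀ k, k ≠ i → mu k = lam k)
    (h : 1 - q ^ ((mu (i + 1) : ℤ) - (mu i : ℤ) + 1) * t⁻¹ ≠ 0) :
    cFactor q t ((lam i : ℤ) - lam (i + 1)) 0 ≠ 0 := by
  rw [hmuk (i + 1) (by omega), hmui, ← zpow_neg_one] at h
  rw [cFactor]
  convert one_sub_zpow_mul_zpow_neg_ne_zero hq ht h using 4
  · push_cast; ring
  · norm_num

end Factors

theorem stmt0 {K : Type*} [Field K] (q t : K) (hq : q ≠ 0) (ht : t ≠ 0)
    (lam : ℕ → ℕ) (L i : ℕ)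
    (hmono : ∀ k, 1 ≤ k → lam (k + 1) ≤ lam k)
    (hL : ∀ k, L < k → lam k = 0)
    (hi : 1 ≤ i) (hiL : i ≤ L)
    (hadd : i = 1 ∨ lam i < lam (i - 1))
    (mu : ℕ → ℕ) (hmu : mu = fun k => if k = i then lam i + 1 else lam k)
    (hden1 : cP' q t lam L ≠ 0)
    (hden2 : cP q t mu L ≠ 0)
    (hden3 : ∀ j ∈ Finset.Icc 1 (i - 1),
      1 - q ^ ((lam i : ℤ) - (lam j : ℤ)) * t ^ ((j : ℤ) - (i : ℤ)) ≠ 0 ∧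
      1 - q ^ ((lam i : ℤ) - (lam j : ℤ) + 1) * t ^ ((j : ℤ) - (i : ℤ)) ≠ 0)
    (hden4 : 1 - q ^ ((mu (i + 1) : ℤ) - (mu i : ℤ) + 1) * t⁻¹ ≠ 0)
    (hden5 : ∀ j ∈ Finset.Icc (i + 1) L,
      1 - q ^ ((mu (j + 1) : ℤ) - (mu i : ℤ) + 1) * t ^ ((i : ℤ) - (j : ℤ) - 1) ≠ 0 ∧
      1 - q ^ ((mu j : ℤ) - (mu i : ℤ)) * t ^ ((i : ℤ) - (j : ℤ)) ≠ 0) :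
    cP' q t mu L / cP' q t lam L * (cP q t lam L / cP q t mu L) * Aplus q t lam i =
      -q * Aminus q t mu L i := by
  have hanti : AntitoneOn lam (Set.Ici 1) := antitoneOn_nat_Ici_of_succ_le fun n hn => hmono n hn
  have hmui : mu i = lam i + 1 := by simp [hmu]
  have hmuk : ∀ k, k ≠ i → mu k = lam k := fun k hk => by simp [hmu, hk]
  obtain ⟨R', hlam', hmu'⟩ := hookProd_add_box hanti hi hadd hmui hmuk (cFactor' q t) hiL
  obtain ⟨R, hlam, hmu⟩ := hookProd_add_box hanti hi hadd hmui hmuk (cFactor q t) hiL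
  rw [cP'_eq_hookProd, hlam'] at hden1
  rw [cP_eq_hookProd, hmu] at hden2
  obtain ⟨hR', hcol'0, hrow'0⟩ := by simpa only [mul_ne_zero_iff] using hden1
  obtain ⟨hR, ⟨ht1, hcol1⟩, hrow1⟩ := by simpa only [mul_ne_zero_iff] using hden2
  calc _ = cFactor' q t 0 0 *
        (rowProd (cFactor' q t) lam L i 1 / rowProd (cFactor' q t) lam L i 0) *
        (rowProd (cFactor q t) lam L i 0 / rowProd (cFactor q t) lam L i 1) := by
        obtain ⟨hcol'1, hcol0⟩ := colProd_ne_zero hq ht hden3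
        rw [cP'_eq_hookProd, cP'_eq_hookProd, cP_eq_hookProd, cP_eq_hookProd, hlam', hmu', hlam,
          hmu, Aplus_eq_colProd hq ht, ← cFactor_zero_zero (q := q)]
        field_simp
    _ = -q * Aminus q t mu L i := by
        obtain ⟨hleg1, hleg'0⟩ := legProd_ne_zero hq ht hmui hmuk hden5
        rw [rowProd_ratio_eq_legProd_ratio _ _ hanti hL hi hiL hrow'0 hrow1
          (cFactor_ne_zero_of_add_box hq ht hmui hmuk hden4) hleg1 hleg'0,
          neg_mul_Aminus_add_box hq ht hmui hmuk, cFactor_zero_zero]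
end
end

section
/- Let λ be a partition and let w be an invertible element of K such that every factor occurring in a denominator below is nonzero. Then ∏_{i=1}^{ℓ(λ)} ∏_{j=1}^{λ_i} g(q^{1−j} t^{i−1} w) = [(1−w)/(1−q t^{−1} w)] · B^-_λ(w). -/
/-!
Put `a(n, k) = 1 - q^{1-n} t^{k-1} w`, `b(n, k) = 1 - q^{-n} t^k w` and `φ = a / b`
(`aFac`, `bFac`, `bRatio`), so that `B^-_λ(w) = φ(λ₁, 0) ∏ᵢ φ(λᵢ₊₁, i) / φ(λᵢ, i)`.
For the box content `x = q^{-j} t^k w` one has `G^+(x) = a(j+1, k) a(j, k+1) b(j+1, k+1)`,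
`G^-(x) = b(j+1, k) b(j, k+1) a(j, k)` and `a(j+1, k+1) = b(j, k) = 1 - x`, so `g(x)` is the
mixed ratio `φ(j+1, k) φ(j, k+1) / (φ(j, k) φ(j+1, k+1))` and the product over the diagram
telescopes: along each row (in cleared form, unconditionally) and then down the first column,
which needs `a(0, k) = 1 - q t^{k-1} w ≠ 0`. Rows are indexed from `k = 0`, row `k` having
`λ_{k+1}` boxes. If `a(0, k+1) = 0` for a row `k`, the hypotheses force row `k` to be nonempty
and row `k + 1` to be empty; then `G^+` vanishes on the first box of row `k` and `B^-_λ(w)` has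
the zero factor `a(λ_{k+2}, k+1)`, so both sides are 0.
-/

open Finset

noncomputable section

/-- `G^+(w) = (1-qw)(1-t⁻¹w)(1-q⁻¹tw)`. -/
def Gplus {K : Type*} [Field K] (q t w : K) : K :=
  (1 - q * w) * (1 - t⁻¹ * w) * (1 - q⁻¹ * t * w)

/-- `G^-(w) = (1-q⁻¹w)(1-tw)(1-qt⁻¹w)`. -/
def Gminus {K : Type*} [Field K] (q t w : K) : K :=
  (1 - q⁻¹ * w) * (1 - t * w) * (1 - q * t⁻¹ * w)

/-- `g(w) = G^+(w)/G^-(w)`. -/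
def gfun {K : Type*} [Field K] (q t w : K) : K := Gplus q t w / Gminus q t w

/-- `B^-_λ(w)`, with the product taken over `i = 1,…,L` (correct whenever `L ≥ ℓ(λ)`). -/
def Bminus {K : Type*} [Field K] (q t : K) (lam : ℕ → ℕ) (L : ℕ) (w : K) : K :=
  ((1 - q ^ (-(lam 1 : ℤ) + 1) * t⁻¹ * w) / (1 - q ^ (-(lam 1 : ℤ)) * w)) *
  ∏ i ∈ Finset.Icc 1 L,
    ((1 - q ^ (-(lam i : ℤ)) * t ^ (i : ℤ) * w) *
      (1 - q ^ (-(lam (i + 1) : ℤ) + 1) * t ^ ((i : ℤ) - 1) * w)) /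
    ((1 - q ^ (-(lam (i + 1) : ℤ)) * t ^ (i : ℤ) * w) *
      (1 - q ^ (-(lam i : ℤ) + 1) * t ^ ((i : ℤ) - 1) * w))


section Telescoping

variable {G₀ : Type*} [CommGroupWithZero G₀]

theorem prod_range_div_mul_of_ne_zero (f : ℕ → G₀) (n : ℕ) (hf : ∀ k ∈ range n, f k ≠ 0) :
    (∏ k ∈ range n, f (k + 1) / f k) * f 0 = f n := by
  induction n with
  | zero => simp
  | succ n ih =>
    rw [prod_range_succ, mul_right_comm, ih fun k hk => hf k (by simp at hk ⊢; omega),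
      mul_div_cancel₀ _ (hf n (by simp))]

theorem prod_range_div'_mul_of_ne_zero (f : ℕ → G₀) (n : ℕ) (hf : ∀ k ∈ range n, f (k + 1) ≠ 0) :
    (∏ k ∈ range n, f k / f (k + 1)) * f n = f 0 := by
  induction n with
  | zero => simp
  | succ n ih =>
    rw [prod_range_succ, mul_assoc, div_mul_cancel₀ _ (hf n (by simp)),
      ih fun k hk => hf k (by simp at hk ⊢; omega)]

end Telescoping

theorem prod_Icc_one_eq_prod_range {M : Type*} [CommMonoid M] (f : ℕ → M) (n : ℕ) :
    ∏ i ∈ Icc 1 n, f i = ∏ k ∈ range n, f (k + 1) := by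
  rw [← Ico_add_one_right_eq_Icc, prod_Ico_eq_prod_range, Nat.add_sub_cancel]
  simp only [add_comm]

section Factors

variable {K : Type*} [Field K] (q t w : K)

def aFac (n k : ℕ) : K := 1 - q ^ (-(n : ℤ) + 1) * t ^ ((k : ℤ) - 1) * w

def bFac (n k : ℕ) : K := 1 - q ^ (-(n : ℤ)) * t ^ (k : ℤ) * w

def boxContent (j k : ℕ) : K := q ^ (-(j : ℤ)) * t ^ (k : ℤ) * w

def rowNum (n k : ℕ) : K :=
  aFac q t w 0 (k + 1) * bFac q t w 0 k * (aFac q t w n k * bFac q t w n (k + 1))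

def rowDen (n k : ℕ) : K :=
  aFac q t w 0 k * bFac q t w 0 (k + 1) * (aFac q t w n (k + 1) * bFac q t w n k)

def bRatio (n k : ℕ) : K := aFac q t w n k / bFac q t w n k

variable {q t w}

theorem aFac_succ_succ (n k : ℕ) : aFac q t w (n + 1) (k + 1) = bFac q t w n k := by
  simp only [aFac, bFac]
  push_cast
  ring_nf

theorem gplus_boxContent (hq : q ≠ 0) (ht : t ≠ 0) (j k : ℕ) :
    Gplus q t (boxContent q t w j k) =
      aFac q t w (j + 1) k * aFac q t w j (k + 1) * bFac q t w (j + 1) (k + 1) := by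
  simp only [Gplus, aFac, bFac, boxContent]
  push_cast
  simp only [neg_add, zpow_add₀ hq, zpow_add₀ ht, zpow_sub₀ ht, zpow_neg_one, zpow_one]
  field_simp

theorem gminus_boxContent (hq : q ≠ 0) (ht : t ≠ 0) (j k : ℕ) :
    Gminus q t (boxContent q t w j k) =
      bFac q t w (j + 1) k * bFac q t w j (k + 1) * aFac q t w j k := by
  simp only [Gminus, aFac, bFac, boxContent]
  push_cast
  simp only [neg_add, zpow_add₀ hq, zpow_add₀ ht, zpow_sub₀ ht, zpow_neg_one, zpow_one]
  ring

theorem prod_gplus_mul_rowDen (hq : q ≠ 0) (ht : t ≠ 0) (n k : ℕ) :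
    (∏ j ∈ range n, Gplus q t (boxContent q t w j k)) * rowDen q t w n k =
      (∏ j ∈ range n, Gminus q t (boxContent q t w j k)) * rowNum q t w n k := by
  induction n with
  | zero => simp only [rowNum, rowDen, prod_range_zero]; ring
  | succ n ih =>
    rw [prod_range_succ, prod_range_succ, gplus_boxContent hq ht, gminus_boxContent hq ht]
    simp only [rowNum, rowDen, aFac_succ_succ] at ih ⊢
    linear_combination
      (aFac q t w (n + 1) k * bFac q t w (n + 1) (k + 1) * bFac q t w (n + 1) k) * ih

theorem prod_gfun_row (hq : q ≠ 0) (ht : t ≠ 0) {n k : ℕ}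
    (hG : ∀ j ∈ range n, Gminus q t (boxContent q t w j k) ≠ 0) (hD : rowDen q t w n k ≠ 0) :
    ∏ j ∈ range n, gfun q t (boxContent q t w j k) = rowNum q t w n k / rowDen q t w n k := by
  rw [eq_div_iff hD]
  simp only [gfun, prod_div_distrib]
  rw [div_mul_eq_mul_div, div_eq_iff (prod_ne_zero_iff.2 hG), prod_gplus_mul_rowDen hq ht,
    mul_comm]

theorem rowNum_div_rowDen (n k : ℕ) :
    rowNum q t w n k / rowDen q t w n k =
      aFac q t w 0 (k + 1) / aFac q t w 0 k * (bFac q t w 0 k / bFac q t w 0 (k + 1)) *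
        (bRatio q t w n k / bRatio q t w n (k + 1)) := by
  simp only [rowNum, rowDen, bRatio, div_eq_mul_inv, mul_inv, inv_inv]
  ring

theorem prod_rowNum_div_rowDen {m : ℕ → ℕ} {L : ℕ} (hmL : m L = 0)
    (ha : ∀ k ≤ L, aFac q t w 0 k ≠ 0) (hb : ∀ k ∈ range L, bFac q t w 0 (k + 1) ≠ 0)
    (hbL : bFac q t w 0 L ≠ 0) :
    ∏ k ∈ range L, rowNum q t w (m k) k / rowDen q t w (m k) k =
      (bRatio q t w 0 0)⁻¹ * (bRatio q t w (m 0) 0 *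
        ∏ k ∈ range L, bRatio q t w (m (k + 1)) (k + 1) / bRatio q t w (m k) (k + 1)) := by
  have htelA := prod_range_div_mul_of_ne_zero (fun k => aFac q t w 0 k) L
    fun k hk => ha k (mem_range.1 hk).le
  have htelB := prod_range_div'_mul_of_ne_zero (fun k => bFac q t w 0 k) L hb
  have htelR : (∏ k ∈ range L, bRatio q t w (m k) k) * bRatio q t w (m L) L =
      bRatio q t w (m 0) 0 * ∏ k ∈ range L, bRatio q t w (m (k + 1)) (k + 1) := by
    rw [← prod_range_succ (fun k => bRatio q t w (m k) k), prod_range_succ', mul_comm]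
  rw [hmL] at htelR
  simp only [rowNum_div_rowDen, prod_mul_distrib]
  rw [eq_div_of_mul_eq (ha 0 L.zero_le) htelA, eq_div_of_mul_eq hbL htelB, prod_div_distrib,
    prod_div_distrib, ← mul_div_assoc (bRatio q t w (m 0) 0), ← htelR]
  simp only [bRatio, inv_div]
  ring

theorem bFac_zero_succ_ne_zero (hq : q ≠ 0) (ht : t ≠ 0) {m : ℕ → ℕ} {L : ℕ} (hm : Antitone m)
    (hG : ∀ k ∈ range L, ∀ j ∈ range (m k), Gminus q t (boxContent q t w j k) ≠ 0)
    (hb : ∀ k ≤ L, bFac q t w (m k) k ≠ 0) {k : ℕ} (hk : k ∈ range L) :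
    bFac q t w 0 (k + 1) ≠ 0 := by
  rcases Nat.eq_zero_or_pos (m k) with hmk | hmk
  · have hmk1 : m (k + 1) = 0 := Nat.eq_zero_of_le_zero (hmk ▸ hm k.le_succ)
    simpa only [hmk1] using hb (k + 1) (mem_range.1 hk)
  · have hG0 := hG k hk 0 (mem_range.2 hmk)
    rw [gminus_boxContent hq ht] at hG0
    exact right_ne_zero_of_mul (left_ne_zero_of_mul hG0)

theorem prod_gfun_diagram (hq : q ≠ 0) (ht : t ≠ 0) {m : ℕ → ℕ} {L : ℕ} (hm : Antitone m)
    (hmL : m L = 0)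
    (hG : ∀ k ∈ range L, ∀ j ∈ range (m k), Gminus q t (boxContent q t w j k) ≠ 0)
    (hb : ∀ k ≤ L, bFac q t w (m k) k ≠ 0) (ha : ∀ k ∈ range L, aFac q t w (m k) (k + 1) ≠ 0)
    (ha00 : aFac q t w 0 0 ≠ 0) :
    ∏ k ∈ range L, ∏ j ∈ range (m k), gfun q t (boxContent q t w j k) =
      (bRatio q t w 0 0)⁻¹ * (bRatio q t w (m 0) 0 *
        ∏ k ∈ range L, bRatio q t w (m (k + 1)) (k + 1) / bRatio q t w (m k) (k + 1)) := by
  have hb0 (k : ℕ) (hk : k ∈ range L) : bFac q t w 0 (k + 1) ≠ 0 :=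
    bFac_zero_succ_ne_zero hq ht hm hG hb hk
  by_cases hdeg : ∃ k ∈ range L, aFac q t w 0 (k + 1) = 0
  · obtain ⟨k, hk, hk0⟩ := hdeg
    have hmk : 0 < m k := Nat.pos_of_ne_zero fun h => ha k hk (by rw [h]; exact hk0)
    have hmk1 : m (k + 1) = 0 := by
      by_contra h
      have hkL : k + 1 < L := lt_of_le_of_ne (mem_range.1 hk) fun e => h (e ▸ hmL)
      apply hG (k + 1) (mem_range.2 hkL) 0 (mem_range.2 (Nat.pos_of_ne_zero h))
      rw [gminus_boxContent hq ht, hk0, mul_zero]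
    have hlhs : ∏ k ∈ range L, ∏ j ∈ range (m k), gfun q t (boxContent q t w j k) = 0 :=
      prod_eq_zero hk <| prod_eq_zero (mem_range.2 hmk) <| by
        rw [gfun, gplus_boxContent hq ht, hk0, mul_zero, zero_mul, zero_div]
    have hrhs : ∏ k ∈ range L, bRatio q t w (m (k + 1)) (k + 1) / bRatio q t w (m k) (k + 1) = 0 :=
      prod_eq_zero hk <| by rw [bRatio, hmk1, hk0, zero_div, zero_div]
    rw [hlhs, hrhs, mul_zero, mul_zero]
  · push Not at hdeg
    have ha0 : ∀ k ≤ L, aFac q t w 0 k ≠ 0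
      | 0, _ => ha00
      | k + 1, hk => hdeg k (mem_range.2 hk)
    have hrow (k : ℕ) (hk : k ∈ range L) :
        ∏ j ∈ range (m k), gfun q t (boxContent q t w j k) =
          rowNum q t w (m k) k / rowDen q t w (m k) k := by
      have hkL := (mem_range.1 hk).le
      exact prod_gfun_row hq ht (hG k hk) <| mul_ne_zero (mul_ne_zero (ha0 k hkL) (hb0 k hk))
        (mul_ne_zero (ha k hk) (hb k hkL))
    rw [prod_congr rfl hrow]
    exact prod_rowNum_div_rowDen hmL ha0 hb0 (by simpa only [hmL] using hb L le_rfl)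

theorem eq_boxContent (j k : ℕ) :
    q ^ (1 - ((j + 1 : ℕ) : ℤ)) * t ^ (((k + 1 : ℕ) : ℤ) - 1) * w = boxContent q t w j k := by
  rw [boxContent]
  push_cast
  ring_nf

theorem div_mul_Bminus_eq (lam : ℕ → ℕ) (L : ℕ) :
    (1 - w) / (1 - q * t⁻¹ * w) * Bminus q t lam L w =
      (bRatio q t w 0 0)⁻¹ * (bRatio q t w (lam 1) 0 *
        ∏ k ∈ range L,
          bRatio q t w (lam (k + 1 + 1)) (k + 1) / bRatio q t w (lam (k + 1)) (k + 1)) := by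
  rw [Bminus, prod_Icc_one_eq_prod_range]
  congr 1
  · simp [bRatio, aFac, bFac]
  · congr 1
    · simp [bRatio, aFac, bFac]
    · refine prod_congr rfl fun k _ => ?_
      simp only [bRatio, aFac, bFac, div_eq_mul_inv, mul_inv, inv_inv]
      ring

end Factors

theorem stmt3_general {K : Type*} [Field K] (q t : K) (hq : q ≠ 0) (ht : t ≠ 0)
    (w : K)
    (lam : ℕ → ℕ) (L : ℕ)
    (hmono : ∀ k, 1 ≤ k → lam (k + 1) ≤ lam k)
    (hL : ∀ k, L < k → lam k = 0)
    (hg : ∀ i ∈ Finset.Icc 1 L, ∀ j ∈ Finset.Icc 1 (lam i),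
      Gminus q t (q ^ (1 - (j : ℤ)) * t ^ ((i : ℤ) - 1) * w) ≠ 0)
    (hB0 : 1 - q ^ (-(lam 1 : ℤ)) * w ≠ 0)
    (hB : ∀ i ∈ Finset.Icc 1 L,
      1 - q ^ (-(lam (i + 1) : ℤ)) * t ^ (i : ℤ) * w ≠ 0 ∧
      1 - q ^ (-(lam i : ℤ) + 1) * t ^ ((i : ℤ) - 1) * w ≠ 0)
    (hr : 1 - q * t⁻¹ * w ≠ 0) :
    (∏ i ∈ Finset.Icc 1 L, ∏ j ∈ Finset.Icc 1 (lam i),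
        gfun q t (q ^ (1 - (j : ℤ)) * t ^ ((i : ℤ) - 1) * w)) =
      (1 - w) / (1 - q * t⁻¹ * w) * Bminus q t lam L w := by
  have hsucc (k : ℕ) (hk : k ∈ range L) : k + 1 ∈ Icc 1 L := by
    simp only [mem_range, mem_Icc] at hk ⊢; omega
  have hG (k : ℕ) (hk : k ∈ range L) (j : ℕ) (hj : j ∈ range (lam (k + 1))) :
      Gminus q t (boxContent q t w j k) ≠ 0 := by
    rw [← eq_boxContent]
    exact hg (k + 1) (hsucc k hk) (j + 1) (by simp only [mem_range, mem_Icc] at hj ⊢; omega)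
  have hb : ∀ k ≤ L, bFac q t w (lam (k + 1)) k ≠ 0
    | 0, _ => by simpa [bFac] using hB0
    | k + 1, hk => (hB (k + 1) (hsucc k (mem_range.2 hk))).1
  have ha00 : aFac q t w 0 0 ≠ 0 := by simpa [aFac] using hr
  rw [div_mul_Bminus_eq]
  simp only [prod_Icc_one_eq_prod_range, eq_boxContent]
  have hanti : Antitone fun k => lam (k + 1) :=
    antitone_nat_of_succ_le fun k => hmono (k + 1) (Nat.le_add_left 1 k)
  exact prod_gfun_diagram hq ht hanti (hL (L + 1) L.lt_succ_self) hG hb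
    (fun k hk => (hB (k + 1) (hsucc k hk)).2) ha00

theorem stmt3 {K : Type*} [Field K] (q t : K) (hq : q ≠ 0) (ht : t ≠ 0)
    (w : K) (hw : w ≠ 0)
    (lam : ℕ → ℕ) (L : ℕ)
    (hmono : ∀ k, 1 ≤ k → lam (k + 1) ≤ lam k)
    (hL : ∀ k, L < k → lam k = 0)
    (hg : ∀ i ∈ Finset.Icc 1 L, ∀ j ∈ Finset.Icc 1 (lam i),
      Gminus q t (q ^ (1 - (j : ℤ)) * t ^ ((i : ℤ) - 1) * w) ≠ 0)
    (hB0 : 1 - q ^ (-(lam 1 : ℤ)) * w ≠ 0)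
    (hB : ∀ i ∈ Finset.Icc 1 L,
      1 - q ^ (-(lam (i + 1) : ℤ)) * t ^ (i : ℤ) * w ≠ 0 ∧
      1 - q ^ (-(lam i : ℤ) + 1) * t ^ ((i : ℤ) - 1) * w ≠ 0)
    (hr : 1 - q * t⁻¹ * w ≠ 0) :
    (∏ i ∈ Finset.Icc 1 L, ∏ j ∈ Finset.Icc 1 (lam i),
        gfun q t (q ^ (1 - (j : ℤ)) * t ^ ((i : ℤ) - 1) * w)) =
      (1 - w) / (1 - q * t⁻¹ * w) * Bminus q t lam L w :=
  stmt3_general q t hq ht w lam L hmono hL hg hB0 hB hr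

end
end

section
/- Let λ be a partition with ℓ = ℓ(λ) and let w be an invertible element of K such that every factor occurring in a denominator below is nonzero. Then ∏_{i=1}^{ℓ} ∏_{j=1}^{λ_i} f(q^{j−1} t^{1−i} w) = [(1−w)/(1−t^{−ℓ} w)] · ∏_{i=1}^{ℓ} (1−q^{λ_i} t^{−i} w)/(1−q^{λ_i} t^{1−i} w). -/
/-!
Write `f(x) = (1-x)/(1-qx) · (1-qt⁻¹x)/(1-t⁻¹x)`. Along row `i` of `λ`, where
`x = q^{j-1} u` with `u = t^{1-i} w`, both factors telescope in `j`, leaving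
`(1-u)/(1-t⁻¹u) · (1-q^{λ_i} t⁻¹u)/(1-q^{λ_i} u)`. The first quotient is
`(1-t^{1-i}w)/(1-t^{-i}w)`, which telescopes in `i` to `(1-w)/(1-t^{-ℓ}w)`. Rows `1, …, ℓ` are
nonempty since `λ` has length `ℓ`, so their `j = 1` entries give `1 - t^{-i}w ≠ 0`.
-/

open Finset

noncomputable section

/-- `f(w) = (1-w)(1-qt⁻¹w) / ((1-qw)(1-t⁻¹w))`. -/
def ffun {K : Type*} [Field K] (q t w : K) : K :=
  (1 - w) * (1 - q * t⁻¹ * w) / ((1 - q * w) * (1 - t⁻¹ * w))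

section Telescoping

-- Multiplied out, since with `x / 0 = 0` the quotient forms fail for `n = 0` when `g 0 = 0`.

variable {G₀ : Type*} [CommGroupWithZero G₀]

theorem prod_Icc_div_mul_eq₀ (g : ℤ → G₀) (n : ℕ) (hg : ∀ i ∈ range n, g i ≠ 0) :
    (∏ i ∈ Icc 1 n, g i / g (i - 1)) * g 0 = g n := by
  induction n with
  | zero => simp
  | succ n ih =>
    rw [prod_Icc_succ_top (by omega), mul_right_comm,
      ih fun i hi => hg i (by simp only [mem_range] at hi ⊢; omega)]
    push_cast
    rw [add_sub_cancel_right, mul_div_cancel₀ _ (hg n (by simp))]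

theorem prod_Icc_div_mul_eq₀' (g : ℤ → G₀) (n : ℕ) (hg : ∀ i ∈ Icc 1 n, g i ≠ 0) :
    (∏ i ∈ Icc 1 n, g (i - 1) / g i) * g n = g 0 := by
  induction n with
  | zero => simp
  | succ n ih =>
    rw [prod_Icc_succ_top (by omega), mul_assoc]
    push_cast
    rw [add_sub_cancel_right, div_mul_cancel₀ _ (by exact_mod_cast hg (n + 1) (by simp)),
      ih fun i hi => hg i (by simp only [mem_Icc] at hi ⊢; omega)]

end Telescoping

theorem zpow_one_add' {G₀ : Type*} [GroupWithZero G₀] (a : G₀) {m : ℤ} (hm : 1 + m ≠ 0) :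
    a ^ (1 + m) = a * a ^ m := by
  rw [zpow_add' (Or.inr (Or.inl hm)), zpow_one]

theorem zpow_sub_one' {G₀ : Type*} [GroupWithZero G₀] (a : G₀) {m : ℤ} (hm : m - 1 ≠ 0) :
    a ^ (m - 1) = a ^ m * a⁻¹ := by
  rw [sub_eq_add_neg, zpow_add' (Or.inr (Or.inl (by rwa [← sub_eq_add_neg]))), zpow_neg_one]

section Field

variable {K : Type*} [Field K]

theorem ffun_eq_div_mul_div (q t x : K) :
    ffun q t x = (1 - x) / (1 - q * x) * ((1 - q * (t⁻¹ * x)) / (1 - t⁻¹ * x)) := by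
  rw [ffun, div_mul_div_comm, mul_assoc q]

theorem prod_ffun_zpow_mul (q t u : K) (m : ℕ) (hm : 1 ≤ m)
    (h : ∀ j ∈ Icc 1 m,
      1 - q * (q ^ ((j : ℤ) - 1) * u) ≠ 0 ∧ 1 - t⁻¹ * (q ^ ((j : ℤ) - 1) * u) ≠ 0) :
    ∏ j ∈ Icc 1 m, ffun q t (q ^ ((j : ℤ) - 1) * u) =
      (1 - u) / (1 - q ^ (m : ℤ) * u) * ((1 - q ^ (m : ℤ) * (t⁻¹ * u)) / (1 - t⁻¹ * u)) := by
  set a : ℤ → K := fun k => 1 - q ^ k * u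
  set b : ℤ → K := fun k => 1 - q ^ k * (t⁻¹ * u)
  have hq_shift : ∀ j : ℕ, 1 ≤ j → q * (q ^ ((j : ℤ) - 1) * u) = q ^ (j : ℤ) * u := fun j hj => by
    rw [← mul_assoc, ← zpow_one_add' q (by omega), add_sub_cancel]
  have ht_comm : ∀ k : ℤ, t⁻¹ * (q ^ k * u) = q ^ k * (t⁻¹ * u) := fun k => by ring
  have hfactor : ∀ j ∈ Icc 1 m, ffun q t (q ^ ((j : ℤ) - 1) * u) =
      a (j - 1) / a j * (b j / b (j - 1)) := fun j hj => by
    have hqt : q * (t⁻¹ * (q ^ ((j : ℤ) - 1) * u)) = q ^ (j : ℤ) * (t⁻¹ * u) := by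
      rw [mul_left_comm, hq_shift j (mem_Icc.1 hj).1, ht_comm]
    rw [ffun_eq_div_mul_div, hq_shift j (mem_Icc.1 hj).1, hqt, ht_comm]
  have ha : ∀ j ∈ Icc 1 m, a j ≠ 0 := fun j hj => by
    simpa only [hq_shift j (mem_Icc.1 hj).1] using (h j hj).1
  have hb : ∀ j ∈ range m, b j ≠ 0 := fun j hj => by
    have := (h (j + 1) (by simp only [mem_range, mem_Icc] at hj ⊢; omega)).2
    rwa [Nat.cast_succ, add_sub_cancel_right, ht_comm] at this
  rw [prod_congr rfl hfactor, prod_mul_distrib,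
    eq_div_of_mul_eq (ha m (by simp [hm])) (prod_Icc_div_mul_eq₀' a m ha),
    eq_div_of_mul_eq (hb 0 (by simp; omega)) (prod_Icc_div_mul_eq₀ b m hb)]
  simp [a, b]

end Field

theorem one_le_of_mem_Icc_of_length {lam : ℕ → ℕ} {l : ℕ}
    (hmono : ∀ k, 1 ≤ k → lam (k + 1) ≤ lam k) (hlpos : l = 0 ∨ lam l ≠ 0) :
    ∀ i ∈ Icc 1 l, 1 ≤ lam i := by
  intro i hi
  rw [mem_Icc] at hi
  have hanti : Antitone fun k => lam (k + 1) :=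
    antitone_nat_of_succ_le fun k => hmono (k + 1) (by omega)
  have hle : lam l ≤ lam i := by
    simpa [Nat.sub_add_cancel hi.1, Nat.sub_add_cancel (hi.1.trans hi.2)] using
      hanti (Nat.sub_le_sub_right hi.2 1)
  omega

theorem stmt4_general {K : Type*} [Field K] (q t : K)
    (w : K)
    (lam : ℕ → ℕ) (l : ℕ)
    (hmono : ∀ k, 1 ≤ k → lam (k + 1) ≤ lam k)
    (hlpos : l = 0 ∨ lam l ≠ 0)
    (hf : ∀ i ∈ Finset.Icc 1 l, ∀ j ∈ Finset.Icc 1 (lam i),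
      1 - q * (q ^ ((j : ℤ) - 1) * t ^ (1 - (i : ℤ)) * w) ≠ 0 ∧
      1 - t⁻¹ * (q ^ ((j : ℤ) - 1) * t ^ (1 - (i : ℤ)) * w) ≠ 0)
    (hd0 : 1 - t ^ (-(l : ℤ)) * w ≠ 0) :
    (∏ i ∈ Finset.Icc 1 l, ∏ j ∈ Finset.Icc 1 (lam i),
        ffun q t (q ^ ((j : ℤ) - 1) * t ^ (1 - (i : ℤ)) * w)) =
      (1 - w) / (1 - t ^ (-(l : ℤ)) * w) *
        ∏ i ∈ Finset.Icc 1 l,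
          (1 - q ^ (lam i : ℤ) * t ^ (-(i : ℤ)) * w) /
            (1 - q ^ (lam i : ℤ) * t ^ (1 - (i : ℤ)) * w) := by
  set c : ℤ → K := fun k => 1 - t ^ (-k) * w
  have hpos := one_le_of_mem_Icc_of_length hmono hlpos
  have ht_shift : ∀ i ∈ Icc 1 l, t⁻¹ * (t ^ (1 - (i : ℤ)) * w) = t ^ (-(i : ℤ)) * w :=
    fun i hi => by
      rw [← mul_assoc, mul_comm t⁻¹, ← zpow_sub_one' t (by simp at hi; omega),
        sub_sub_cancel_left]
  have hrow : ∀ i ∈ Icc 1 l, ∏ j ∈ Icc 1 (lam i),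
      ffun q t (q ^ ((j : ℤ) - 1) * t ^ (1 - (i : ℤ)) * w) =
        c (i - 1) / c i * ((1 - q ^ (lam i : ℤ) * t ^ (-(i : ℤ)) * w) /
          (1 - q ^ (lam i : ℤ) * t ^ (1 - (i : ℤ)) * w)) := fun i hi => by
    simp only [mul_assoc] at hf ⊢
    rw [prod_ffun_zpow_mul q t _ _ (hpos i hi) (hf i hi), ht_shift i hi]
    simp only [c, neg_sub]
    rw [div_mul_div_comm, div_mul_div_comm, mul_comm (1 - t ^ (-(i : ℤ)) * w)]
  have hc : ∀ i ∈ Icc 1 l, c i ≠ 0 := fun i hi => by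
    simpa only [Nat.cast_one, sub_self, zpow_zero, one_mul, ht_shift i hi] using
      (hf i hi 1 (by simp [hpos i hi])).2
  rw [prod_congr rfl hrow, prod_mul_distrib,
    eq_div_of_mul_eq hd0 (prod_Icc_div_mul_eq₀' c l hc)]
  simp [c]

theorem stmt4 {K : Type*} [Field K] (q t : K) (hq : q ≠ 0) (ht : t ≠ 0)
    (w : K) (hw : w ≠ 0)
    (lam : ℕ → ℕ) (l : ℕ)
    (hmono : ∀ k, 1 ≤ k → lam (k + 1) ≤ lam k)
    (hlen : ∀ k, l < k → lam k = 0)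
    (hlpos : l = 0 ∨ lam l ≠ 0)
    (hf : ∀ i ∈ Finset.Icc 1 l, ∀ j ∈ Finset.Icc 1 (lam i),
      1 - q * (q ^ ((j : ℤ) - 1) * t ^ (1 - (i : ℤ)) * w) ≠ 0 ∧
      1 - t⁻¹ * (q ^ ((j : ℤ) - 1) * t ^ (1 - (i : ℤ)) * w) ≠ 0)
    (hd0 : 1 - t ^ (-(l : ℤ)) * w ≠ 0)
    (hd : ∀ i ∈ Finset.Icc 1 l, 1 - q ^ (lam i : ℤ) * t ^ (1 - (i : ℤ)) * w ≠ 0) :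
    (∏ i ∈ Finset.Icc 1 l, ∏ j ∈ Finset.Icc 1 (lam i),
        ffun q t (q ^ ((j : ℤ) - 1) * t ^ (1 - (i : ℤ)) * w)) =
      (1 - w) / (1 - t ^ (-(l : ℤ)) * w) *
        ∏ i ∈ Finset.Icc 1 l,
          (1 - q ^ (lam i : ℤ) * t ^ (-(i : ℤ)) * w) /
            (1 - q ^ (lam i : ℤ) * t ^ (1 - (i : ℤ)) * w) :=
  stmt4_general q t w lam l hmono hlpos hf hd0

end
end

section
/- Let λ be a partition with ℓ = ℓ(λ) and let w be an invertible element of K such that every factor occurring in a denominator below is nonzero. Then ∏_{i=1}^{ℓ} ∏_{j=1}^{λ_i} f(q^{1−j} t^{i−1} w) = [(1−q t^{−1} w)/(1−q t^{ℓ−1} w)] · ∏_{i=1}^{ℓ} (1−q^{1−λ_i} t^{i−1} w)/(1−q^{1−λ_i} t^{i−2} w). -/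
open Finset

noncomputable section

lemma innerP {K : Type*} [Field K] (q : K) (hq : q ≠ 0) (a b : K) (m : ℕ)
    (hA : ∀ j ∈ Icc 1 m, 1 - q ^ (2 - (j:ℤ)) * a ≠ 0)
    (hB : ∀ j ∈ Icc 1 m, 1 - q ^ (1 - (j:ℤ)) * b ≠ 0) :
    (∏ j ∈ Icc 1 m, ((1 - q ^ (1-(j:ℤ)) * a) * (1 - q ^ (2-(j:ℤ)) * b) /
      ((1 - q ^ (2-(j:ℤ)) * a) * (1 - q ^ (1-(j:ℤ)) * b)))) *
      ((1 - q * a) * (1 - q ^ (1-(m:ℤ)) * b)) =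
    (1 - q ^ (1-(m:ℤ)) * a) * (1 - q * b) := by
  induction m with
  | zero => norm_num
  | succ n ih =>
    have hsub : Icc 1 n ⊆ Icc 1 (n+1) := Icc_subset_Icc_right (by omega)
    have ih' := ih (fun j hj => hA j (hsub hj)) (fun j hj => hB j (hsub hj))
    rw [Finset.prod_Icc_succ_top (by omega)]
    have h1 : 1 - q ^ (2 - ((n+1:ℕ):ℤ)) * a ≠ 0 := hA _ (by simp)
    have h2 : 1 - q ^ (1 - ((n+1:ℕ):ℤ)) * b ≠ 0 := hB _ (by simp)
    have e1 : (2 - ((n+1:ℕ):ℤ)) = 1 - (n:ℤ) := by push_cast; ring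
    have e2 : (1 - ((n+1:ℕ):ℤ)) = -(n:ℤ) := by push_cast; ring
    have e3 : q ^ (1 - (n:ℤ)) = q * q ^ (-(n:ℤ)) := by
      rw [sub_eq_add_neg, zpow_add₀ hq, zpow_one]
    simp only [e1, e2] at h1 h2 ⊢
    set x := q ^ (-(n:ℤ)) with hx
    rw [e3] at ih' h1 ⊢
    rw [← mul_div_assoc, div_mul_eq_mul_div, div_eq_iff (mul_ne_zero h1 h2)]
    linear_combination ((1 - x*a)*(1 - x*b)) * ih'

lemma outerP {K : Type*} [Field K] (g N D : ℕ → K) (n : ℕ)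
    (hg : ∀ i ∈ Icc 1 n, g i ≠ 0) :
    (∏ i ∈ Icc 1 n, (N i * g (i-1) / (g i * D i))) * g n
      = g 0 * ∏ i ∈ Icc 1 n, (N i / D i) := by
  induction n with
  | zero => simp
  | succ n ih =>
    have hsub : Icc 1 n ⊆ Icc 1 (n+1) := Icc_subset_Icc_right (by omega)
    have ih' := ih (fun i hi => hg i (hsub hi))
    have hgn : g (n+1) ≠ 0 := hg _ (by simp)
    rw [Finset.prod_Icc_succ_top (by omega : 1 ≤ n+1),
        Finset.prod_Icc_succ_top (by omega : 1 ≤ n+1)]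
    have key : N (n+1) * g (n+1-1) / (g (n+1) * D (n+1)) * g (n+1)
        = g n * (N (n+1) / D (n+1)) := by
      rw [mul_comm (g (n+1)) (D (n+1)), ← div_div, div_mul_cancel₀ _ hgn]
      simp only [Nat.add_sub_cancel]
      ring
    rw [mul_assoc, key]
    linear_combination (N (n+1) / D (n+1)) * ih'

theorem stmt5 {K : Type*} [Field K] (q t : K) (hq : q ≠ 0) (ht : t ≠ 0)
    (w : K) (hw : w ≠ 0)
    (lam : ℕ → ℕ) (l : ℕ)
    (hmono : ∀ k, 1 ≤ k → lam (k + 1) ≤ lam k)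
    (hlen : ∀ k, l < k → lam k = 0)
    (hlpos : l = 0 ∨ lam l ≠ 0)
    (hf : ∀ i ∈ Finset.Icc 1 l, ∀ j ∈ Finset.Icc 1 (lam i),
      1 - q * (q ^ (1 - (j : ℤ)) * t ^ ((i : ℤ) - 1) * w) ≠ 0 ∧
      1 - t⁻¹ * (q ^ (1 - (j : ℤ)) * t ^ ((i : ℤ) - 1) * w) ≠ 0)
    (hd0 : 1 - q * t ^ ((l : ℤ) - 1) * w ≠ 0)
    (hd : ∀ i ∈ Finset.Icc 1 l, 1 - q ^ (1 - (lam i : ℤ)) * t ^ ((i : ℤ) - 2) * w ≠ 0) :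
    (∏ i ∈ Finset.Icc 1 l, ∏ j ∈ Finset.Icc 1 (lam i),
        ffun q t (q ^ (1 - (j : ℤ)) * t ^ ((i : ℤ) - 1) * w)) =
      (1 - q * t⁻¹ * w) / (1 - q * t ^ ((l : ℤ) - 1) * w) *
        ∏ i ∈ Finset.Icc 1 l,
          (1 - q ^ (1 - (lam i : ℤ)) * t ^ ((i : ℤ) - 1) * w) /
            (1 - q ^ (1 - (lam i : ℤ)) * t ^ ((i : ℤ) - 2) * w) := by

  -- all parts up to l are positive
  have hlam : ∀ i ∈ Icc 1 l, 1 ≤ lam i := by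
    intro i hi
    obtain ⟨hi1, hil⟩ := mem_Icc.mp hi
    have hdec : ∀ k, i ≤ k → lam k ≤ lam i := by
      intro k hk
      induction k, hk using Nat.le_induction with
      | base => exact le_rfl
      | succ k hk ih => exact le_trans (hmono k (le_trans hi1 hk)) ih
    have h0 : lam l ≠ 0 := hlpos.resolve_left (by omega)
    have := hdec l hil
    omega
  have hq2 : ∀ j : ℤ, q ^ (2 - j) = q * q ^ (1 - j) := by
    intro j
    rw [show (2 - j) = 1 + (1 - j) by ring, zpow_add₀ hq, zpow_one]
  set g : ℕ → K := fun i => 1 - q * t ^ ((i:ℤ) - 1) * w with hg_def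
  set N : ℕ → K := fun i => 1 - q ^ (1 - (lam i : ℤ)) * t ^ ((i:ℤ) - 1) * w with hN_def
  set D : ℕ → K := fun i => 1 - q ^ (1 - (lam i : ℤ)) * t ^ ((i:ℤ) - 2) * w with hD_def
  have hgne : ∀ i ∈ Icc 1 l, g i ≠ 0 := by
    intro i hi
    have h1 := (hf i hi 1 (mem_Icc.mpr ⟨le_rfl, hlam i hi⟩)).1
    have e : q * (q ^ (1 - ((1:ℕ):ℤ)) * t ^ ((i:ℤ) - 1) * w) = q * t ^ ((i:ℤ)-1) * w := by
      norm_num [mul_assoc]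
    rwa [e] at h1
  have step : ∀ i ∈ Icc 1 l,
      (∏ j ∈ Icc 1 (lam i), ffun q t (q ^ (1 - (j:ℤ)) * t ^ ((i:ℤ) - 1) * w))
        = N i * g (i - 1) / (g i * D i) := by
    intro i hi
    obtain ⟨hi1, hil⟩ := mem_Icc.mp hi
    set a : K := t ^ ((i:ℤ) - 1) * w with ha
    set b : K := t ^ ((i:ℤ) - 2) * w with hb
    have hba : b = t⁻¹ * a := by
      rw [ha, hb, show ((i:ℤ) - 2) = -1 + ((i:ℤ) - 1) by ring, zpow_add₀ ht,
        zpow_neg_one, mul_assoc]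
    have hA : ∀ j ∈ Icc 1 (lam i), 1 - q ^ (2 - (j:ℤ)) * a ≠ 0 := by
      intro j hj
      have := (hf i hi j hj).1
      rw [show q * (q ^ (1 - (j:ℤ)) * t ^ ((i:ℤ) - 1) * w)
          = q ^ (2 - (j:ℤ)) * a by rw [hq2, ha]; ring] at this
      exact this
    have hB : ∀ j ∈ Icc 1 (lam i), 1 - q ^ (1 - (j:ℤ)) * b ≠ 0 := by
      intro j hj
      have := (hf i hi j hj).2
      rw [show t⁻¹ * (q ^ (1 - (j:ℤ)) * t ^ ((i:ℤ) - 1) * w)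
          = q ^ (1 - (j:ℤ)) * b by rw [hba, ha]; ring] at this
      exact this
    have hterm : ∀ j ∈ Icc 1 (lam i),
        ffun q t (q ^ (1 - (j:ℤ)) * t ^ ((i:ℤ) - 1) * w)
          = (1 - q ^ (1-(j:ℤ)) * a) * (1 - q ^ (2-(j:ℤ)) * b) /
            ((1 - q ^ (2-(j:ℤ)) * a) * (1 - q ^ (1-(j:ℤ)) * b)) := by
      intro j hj
      have E1 : q * t⁻¹ * (q ^ (1 - (j:ℤ)) * t ^ ((i:ℤ) - 1) * w)
          = q ^ (2 - (j:ℤ)) * b := by rw [hq2, hba, ha]; ring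
      have E2 : q * (q ^ (1 - (j:ℤ)) * t ^ ((i:ℤ) - 1) * w)
          = q ^ (2 - (j:ℤ)) * a := by rw [hq2, ha]; ring
      have E3 : t⁻¹ * (q ^ (1 - (j:ℤ)) * t ^ ((i:ℤ) - 1) * w)
          = q ^ (1 - (j:ℤ)) * b := by rw [hba, ha]; ring
      have E4 : q ^ (1 - (j:ℤ)) * t ^ ((i:ℤ) - 1) * w = q ^ (1 - (j:ℤ)) * a := by
        rw [ha]; ring
      rw [ffun, E1, E2, E3, E4]
    rw [Finset.prod_congr rfl hterm]
    have m1 : 1 ≤ lam i := hlam i hi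
    have h1 : 1 - q * a ≠ 0 := by
      have := hA 1 (mem_Icc.mpr ⟨le_rfl, m1⟩)
      norm_num at this
      convert this using 3
    have h2 : 1 - q ^ (1 - (lam i : ℤ)) * b ≠ 0 := hB (lam i) (mem_Icc.mpr ⟨m1, le_rfl⟩)
    have key := innerP q hq a b (lam i) hA hB
    have hNg : N i = 1 - q ^ (1 - (lam i:ℤ)) * a := by rw [hN_def, ha]; ring_nf
    have hDg : D i = 1 - q ^ (1 - (lam i:ℤ)) * b := by rw [hD_def, hb]; ring_nf
    have hgi : g i = 1 - q * a := by rw [hg_def, ha]; ring_nf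
    have hgi1 : g (i-1) = 1 - q * b := by
      rw [hg_def, hb]
      have : ((i - 1 : ℕ) : ℤ) - 1 = (i:ℤ) - 2 := by omega
      simp only [this]
      ring_nf
    rw [hNg, hDg, hgi, hgi1, eq_div_iff (mul_ne_zero h1 h2)]
    linear_combination key
  rw [Finset.prod_congr rfl step]
  have main := outerP g N D l hgne
  have hgl : g l = 1 - q * t ^ ((l:ℤ) - 1) * w := rfl
  have hg0 : g 0 = 1 - q * t⁻¹ * w := by
    simp [hg_def, zpow_neg_one]
  rw [hgl, hg0] at main
  rw [div_mul_eq_mul_div, eq_div_iff hd0]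
  exact main

end
end

section
/- Let λ be a partition, let i ≥ 1 satisfy i = 1 or λ_i < λ_{i−1} (so that λ+1_i is a partition), and let L be any integer with L ≥ i and L ≥ ℓ(λ). Then c_{λ+1_i} = c_λ · t^{i−1} (1−q^{λ_i} t^{L−i+1}) · ∏_{j=1}^{i−1} (1−q^{λ_i−λ_j+1} t^{j−i−1})/(1−q^{λ_i−λ_j+1} t^{j−i}) · ∏_{j=i+1}^{L} (1−q^{λ_i−λ_j} t^{j−i})/(1−q^{λ_i−λ_j} t^{j−i+1}), provided all factors occurring in denominators are nonzero; in particular the right-hand side does not depend on the choice of L. -/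
open Finset

noncomputable section

set_option linter.unusedSectionVars false

lemma tele6 {K : Type*} [Field K] (q T : K) (m : ℕ) :
    ∀ b a : ℕ, a ≤ b →
    (∏ j ∈ Ioc a b, (1 - q ^ ((m:ℤ) + 1 - (j:ℤ)) * T)) * (1 - q ^ ((m:ℤ) - (b:ℤ)) * T)
    = (∏ j ∈ Ioc a b, (1 - q ^ ((m:ℤ) - (j:ℤ)) * T)) * (1 - q ^ ((m:ℤ) - (a:ℤ)) * T) := by
  intro b
  induction b with
  | zero => intro a ha; interval_cases a; simp
  | succ b ih =>
    intro a ha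
    rcases Nat.eq_or_lt_of_le ha with h | h
    · subst h; simp
    · have hab : a ≤ b := Nat.lt_succ_iff.mp h
      rw [Finset.prod_Ioc_succ_top hab, Finset.prod_Ioc_succ_top hab]
      have key := ih a hab
      push_cast
      rw [show (m:ℤ) + 1 - ((b:ℤ) + 1) = (m:ℤ) - (b:ℤ) by ring]
      linear_combination (1 - q ^ ((m:ℤ) - ((b:ℤ)+1)) * T) * key

lemma anti6 (f : ℕ → ℕ) (P : ℕ) (h : ∀ k, P ≤ k → f (k+1) ≤ f k) :
    ∀ a b, P ≤ a → a ≤ b → f b ≤ f a := by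
  intro a b hPa hab
  induction b, hab using Nat.le_induction with
  | base => exact le_refl _
  | succ n hn ih => exact le_trans (h n (le_trans hPa hn)) ih

lemma lemA6 {K : Type*} [Field K] (q t : K) (i m : ℕ) (f : ℕ → ℕ)
    (hf : ∀ k, i < k → f (k+1) ≤ f k) (hfm : ∀ k, i < k → f k ≤ m) :
    ∀ L, i ≤ L → ∀ r, r ≤ m → (∀ k, i < k → k ≤ L → r ≤ f k) →
    (1 - t) *
      (∏ j ∈ Ioc r m, (1 - q ^ ((m:ℤ) + 1 - (j:ℤ)) *
        t ^ (((((Ioc i L).filter (fun k => j ≤ f k)).card : ℕ) : ℤ) + 1))) *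
      (∏ k ∈ Ioc i L, (1 - q ^ ((m:ℤ) - (f k : ℤ)) * t ^ ((k:ℤ) - (i:ℤ) + 1)))
    = (∏ j ∈ Ioc r m, (1 - q ^ ((m:ℤ) - (j:ℤ)) *
        t ^ (((((Ioc i L).filter (fun k => j ≤ f k)).card : ℕ) : ℤ) + 1))) *
      (1 - q ^ ((m:ℤ) - (r:ℤ)) * t ^ ((L:ℤ) - (i:ℤ) + 1)) *
      (∏ k ∈ Ioc i L, (1 - q ^ ((m:ℤ) - (f k : ℤ)) * t ^ ((k:ℤ) - (i:ℤ)))) := by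
  intro L hL
  induction L, hL using Nat.le_induction with
  | base =>
    intro r hrm _
    simp only [Ioc_self, Finset.filter_empty, Finset.prod_empty, Finset.card_empty,
      Nat.cast_zero, zero_add, mul_one, zpow_one]
    rw [show (i:ℤ) - (i:ℤ) + 1 = 1 by ring, zpow_one,
      show (1 : K) - t = 1 - q ^ ((m:ℤ) - (m:ℤ)) * t by rw [sub_self, zpow_zero, one_mul],
      mul_comm]
    exact tele6 q t m m r hrm
  | succ L hiL ih =>
    intro r' hr'm hr'
    have hrm : f (L+1) ≤ m := hfm (L+1) (Nat.lt_succ_of_le hiL)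
    have hr'r : r' ≤ f (L+1) := hr' (L+1) (Nat.lt_succ_of_le hiL) le_rfl
    have hrk : ∀ k, i < k → k ≤ L → f (L+1) ≤ f k := by
      intro k hik hkL
      exact anti6 f (i+1) (fun k hk => hf k (Nat.lt_of_succ_le hk)) k (L+1) hik (by omega)
    have hcard_le : ∀ j, j ≤ f (L+1) →
        ((((Ioc i (L+1)).filter (fun k => j ≤ f k)).card : ℕ) : ℤ) = (L:ℤ) - i + 1 := by
      intro j hj
      rw [Finset.filter_true_of_mem, Nat.card_Ioc]
      · push_cast [Nat.cast_sub (by omega : i ≤ L + 1)]; ring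
      intro k hk
      rw [Finset.mem_Ioc] at hk
      rcases Nat.eq_or_lt_of_le hk.2 with h | h
      · subst h; exact hj
      · exact le_trans hj (hrk k hk.1 (by omega))
    have hcard_gt : ∀ j, f (L+1) < j →
        ((Ioc i (L+1)).filter (fun k => j ≤ f k)) = ((Ioc i L).filter (fun k => j ≤ f k)) := by
      intro j hj
      ext k
      simp only [Finset.mem_filter, Finset.mem_Ioc]
      constructor
      · rintro ⟨⟨h1, h2⟩, h3⟩
        refine ⟨⟨h1, ?_⟩, h3⟩
        rcases Nat.eq_or_lt_of_le h2 with h | h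
        · exfalso; subst h; omega
        · omega
      · rintro ⟨⟨h1, h2⟩, h3⟩; exact ⟨⟨h1, by omega⟩, h3⟩
    -- split the j-products and k-products
    rw [← Finset.prod_Ioc_consecutive _ hr'r hrm, ← Finset.prod_Ioc_consecutive _ hr'r hrm,
      Finset.prod_Ioc_succ_top hiL, Finset.prod_Ioc_succ_top hiL]
    -- rewrite low-j blocks using card = L+1-i
    have e1 : (∏ j ∈ Ioc r' (f (L+1)), (1 - q ^ ((m:ℤ) + 1 - (j:ℤ)) *
        t ^ (((((Ioc i (L+1)).filter (fun k => j ≤ f k)).card : ℕ) : ℤ) + 1)))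
        = ∏ j ∈ Ioc r' (f (L+1)), (1 - q ^ ((m:ℤ) + 1 - (j:ℤ)) * t ^ ((L:ℤ) - i + 1 + 1)) := by
      refine Finset.prod_congr rfl fun j hj => ?_
      rw [Finset.mem_Ioc] at hj
      rw [hcard_le j hj.2]
    have e2 : (∏ j ∈ Ioc r' (f (L+1)), (1 - q ^ ((m:ℤ) - (j:ℤ)) *
        t ^ (((((Ioc i (L+1)).filter (fun k => j ≤ f k)).card : ℕ) : ℤ) + 1)))
        = ∏ j ∈ Ioc r' (f (L+1)), (1 - q ^ ((m:ℤ) - (j:ℤ)) * t ^ ((L:ℤ) - i + 1 + 1)) := by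
      refine Finset.prod_congr rfl fun j hj => ?_
      rw [Finset.mem_Ioc] at hj
      rw [hcard_le j hj.2]
    have e3 : (∏ j ∈ Ioc (f (L+1)) m, (1 - q ^ ((m:ℤ) + 1 - (j:ℤ)) *
        t ^ (((((Ioc i (L+1)).filter (fun k => j ≤ f k)).card : ℕ) : ℤ) + 1)))
        = ∏ j ∈ Ioc (f (L+1)) m, (1 - q ^ ((m:ℤ) + 1 - (j:ℤ)) *
        t ^ (((((Ioc i L).filter (fun k => j ≤ f k)).card : ℕ) : ℤ) + 1)) := by
      refine Finset.prod_congr rfl fun j hj => ?_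
      rw [Finset.mem_Ioc] at hj
      rw [hcard_gt j hj.1]
    have e4 : (∏ j ∈ Ioc (f (L+1)) m, (1 - q ^ ((m:ℤ) - (j:ℤ)) *
        t ^ (((((Ioc i (L+1)).filter (fun k => j ≤ f k)).card : ℕ) : ℤ) + 1)))
        = ∏ j ∈ Ioc (f (L+1)) m, (1 - q ^ ((m:ℤ) - (j:ℤ)) *
        t ^ (((((Ioc i L).filter (fun k => j ≤ f k)).card : ℕ) : ℤ) + 1)) := by
      refine Finset.prod_congr rfl fun j hj => ?_
      rw [Finset.mem_Ioc] at hj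
      rw [hcard_gt j hj.1]
    rw [e1, e2, e3, e4]
    have htele := tele6 q (t ^ ((L:ℤ) - i + 1 + 1)) m (f (L+1)) r' hr'r
    have hIH := ih (f (L+1)) hrm hrk
    push_cast
    rw [show ((L:ℤ) + 1) - (i:ℤ) = (L:ℤ) - (i:ℤ) + 1 by ring]
    set T' := t ^ ((L:ℤ) - i + 1 + 1) with hT'
    set P1 := ∏ j ∈ Ioc r' (f (L+1)), (1 - q ^ ((m:ℤ) + 1 - (j:ℤ)) * T') with hP1
    set Q1 := ∏ j ∈ Ioc r' (f (L+1)), (1 - q ^ ((m:ℤ) - (j:ℤ)) * T') with hQ1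
    set P2 := ∏ j ∈ Ioc (f (L+1)) m, (1 - q ^ ((m:ℤ) + 1 - (j:ℤ)) *
        t ^ (((((Ioc i L).filter (fun k => j ≤ f k)).card : ℕ) : ℤ) + 1)) with hP2
    set Q2 := ∏ j ∈ Ioc (f (L+1)) m, (1 - q ^ ((m:ℤ) - (j:ℤ)) *
        t ^ (((((Ioc i L).filter (fun k => j ≤ f k)).card : ℕ) : ℤ) + 1)) with hQ2
    set Pk := ∏ k ∈ Ioc i L, (1 - q ^ ((m:ℤ) - (f k : ℤ)) * t ^ ((k:ℤ) - (i:ℤ) + 1)) with hPk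
    set Nk := ∏ k ∈ Ioc i L, (1 - q ^ ((m:ℤ) - (f k : ℤ)) * t ^ ((k:ℤ) - (i:ℤ))) with hNk
    linear_combination ((1 - t) * P2 * Pk) * htele +
      (Q1 * (1 - q ^ ((m:ℤ) - (r':ℤ)) * T')) * hIH

section ConjFacts
variable (lam : ℕ → ℕ) (L i : ℕ)
  (hmono : ∀ k, 1 ≤ k → lam (k + 1) ≤ lam k)
  (hi : 1 ≤ i) (hiL : i ≤ L)
  (hadd : i = 1 ∨ lam i < lam (i - 1))
  (mu : ℕ → ℕ) (hmu : mu = fun k => if k = i then lam i + 1 else lam k)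

include hmono hi hiL hadd hmu

lemma hc1 : ∀ j, j ≠ lam i + 1 → conjP mu L j = conjP lam L j := by
  intro j hj
  unfold conjP
  congr 1
  apply Finset.filter_congr
  intro k hk
  subst hmu
  simp only
  split_ifs with h
  · subst h; omega
  · rfl

lemma hc2 : conjP lam L (lam i + 1) = i - 1 := by
  unfold conjP
  have : (Finset.Icc 1 L).filter (fun k => lam i + 1 ≤ lam k) = Finset.Icc 1 (i-1) := by
    ext k
    simp only [Finset.mem_filter, Finset.mem_Icc]
    constructor
    · rintro ⟨⟨h1, h2⟩, h3⟩
      refine ⟨h1, ?_⟩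
      by_contra hcon
      have hik : i ≤ k := by omega
      have := anti6 lam 1 hmono i k hi hik
      omega
    · rintro ⟨h1, h2⟩
      have hi2 : 2 ≤ i := by omega
      have hadd' : lam i < lam (i-1) := by rcases hadd with h | h; omega; exact h
      have h3 := anti6 lam 1 hmono k (i-1) h1 h2
      exact ⟨⟨h1, by omega⟩, by omega⟩
  rw [this, Nat.card_Icc]
  omega

lemma hc3 : conjP mu L (lam i + 1) = i := by
  unfold conjP
  have : (Finset.Icc 1 L).filter (fun k => lam i + 1 ≤ mu k) = Finset.Icc 1 i := by
    ext k
    subst hmu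
    simp only [Finset.mem_filter, Finset.mem_Icc]
    by_cases hk : k = i
    · subst hk; simp; omega
    · simp only [if_neg hk]
      constructor
      · rintro ⟨⟨h1, h2⟩, h3⟩
        refine ⟨h1, ?_⟩
        by_contra hcon
        have hik : i ≤ k := by omega
        have := anti6 lam 1 hmono i k hi hik
        omega
      · rintro ⟨h1, h2⟩
        have h2' : k ≤ i - 1 := by omega
        have hi2 : 2 ≤ i := by omega
        have hadd' : lam i < lam (i-1) := by rcases hadd with h | h; omega; exact h
        have h3 := anti6 lam 1 hmono k (i-1) h1 h2'
        exact ⟨⟨h1, by omega⟩, by omega⟩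
  rw [this, Nat.card_Icc]
  omega

lemma hc4 : ∀ j, 1 ≤ j → j ≤ lam i →
    conjP lam L j = i + ((Ioc i L).filter (fun k => j ≤ lam k)).card := by
  intro j h1 h2
  unfold conjP
  rw [show Finset.Icc 1 L = Finset.Ioc 0 L from Finset.Icc_add_one_left_eq_Ioc 0 L,
    ← Finset.Ioc_union_Ioc_eq_Ioc (Nat.zero_le i) hiL, Finset.filter_union,
    Finset.card_union_of_disjoint, Finset.filter_true_of_mem, Nat.card_Ioc]
  · omega
  · intro k hk
    rw [Finset.mem_Ioc] at hk
    exact le_trans h2 (anti6 lam 1 hmono k i hk.1 hk.2)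
  · refine Finset.disjoint_left.mpr fun k hk1 hk2 => ?_
    rw [Finset.mem_filter, Finset.mem_Ioc] at hk1
    rw [Finset.mem_filter, Finset.mem_Ioc] at hk2
    omega

end ConjFacts

lemma aux1 {K : Type*} [Field K] (q t : K) (hq : q ≠ 0) (ht : t ≠ 0) (a b : ℤ) :
    t * (1 - q ^ a * t ^ (b - 1)) * (1 - q ^ (-a) * t ^ (-b))
    = (1 - q ^ a * t ^ b) * (1 - q ^ (-a) * t ^ (-(b - 1))) := by
  have h1 : t ^ (b - 1) = t ^ b * t⁻¹ := by
    rw [zpow_sub₀ ht, zpow_one, div_eq_mul_inv]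
  have h2 : t ^ (-(b-1)) = (t ^ b)⁻¹ * t := by
    rw [show -(b-1) = -b + 1 by ring, zpow_add₀ ht, zpow_one, zpow_neg]
  rw [h1, h2, zpow_neg, zpow_neg]
  have hX : q ^ a ≠ 0 := zpow_ne_zero a hq
  have hY : t ^ b ≠ 0 := zpow_ne_zero b ht
  field_simp
  ring

lemma aux2 {K : Type*} [Field K] (q t : K) (hq : q ≠ 0) (ht : t ≠ 0) (a b : ℤ) :
    (1 - q ^ a * t ^ b) = -(q ^ a * t ^ b) * (1 - q ^ (-a) * t ^ (-b)) := by
  rw [zpow_neg, zpow_neg]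
  have hX : q ^ a ≠ 0 := zpow_ne_zero a hq
  have hY : t ^ b ≠ 0 := zpow_ne_zero b ht
  field_simp
  ring

theorem stmt6 {K : Type*} [Field K] (q t : K) (hq : q ≠ 0) (ht : t ≠ 0)
    (lam : ℕ → ℕ) (L i : ℕ)
    (hmono : ∀ k, 1 ≤ k → lam (k + 1) ≤ lam k)
    (hL : ∀ k, L < k → lam k = 0)
    (hi : 1 ≤ i) (hiL : i ≤ L)
    (hadd : i = 1 ∨ lam i < lam (i - 1))
    (mu : ℕ → ℕ) (hmu : mu = fun k => if k = i then lam i + 1 else lam k)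
    (hden1 : ∀ j ∈ Finset.Icc 1 (i - 1),
      1 - q ^ ((lam i : ℤ) - (lam j : ℤ) + 1) * t ^ ((j : ℤ) - (i : ℤ)) ≠ 0)
    (hden2 : ∀ j ∈ Finset.Icc (i + 1) L,
      1 - q ^ ((lam i : ℤ) - (lam j : ℤ)) * t ^ ((j : ℤ) - (i : ℤ) + 1) ≠ 0) :
    cP q t mu L =
      cP q t lam L * t ^ ((i : ℤ) - 1) *
        (1 - q ^ (lam i : ℤ) * t ^ ((L : ℤ) - (i : ℤ) + 1)) *
        (∏ j ∈ Finset.Icc 1 (i - 1),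
          (1 - q ^ ((lam i : ℤ) - (lam j : ℤ) + 1) * t ^ ((j : ℤ) - (i : ℤ) - 1)) /
            (1 - q ^ ((lam i : ℤ) - (lam j : ℤ) + 1) * t ^ ((j : ℤ) - (i : ℤ)))) *
        ∏ j ∈ Finset.Icc (i + 1) L,
          (1 - q ^ ((lam i : ℤ) - (lam j : ℤ)) * t ^ ((j : ℤ) - (i : ℤ))) /
            (1 - q ^ ((lam i : ℤ) - (lam j : ℤ)) * t ^ ((j : ℤ) - (i : ℤ) + 1)) := by
  have hanti := anti6 lam 1 hmono
  have hC1 := hc1 lam L i hmono hi hiL hadd mu hmu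
  have hC2 := hc2 lam L i hmono hi hiL hadd mu hmu
  have hC3 := hc3 lam L i hmono hi hiL hadd mu hmu
  have hC4 := hc4 lam L i hmono hi hiL hadd mu hmu
  have hIoc1 : Finset.Icc 1 (i-1) = Finset.Ioc 0 (i-1) := Finset.Icc_add_one_left_eq_Ioc 0 (i-1)
  have hIoc2 : Finset.Icc (i+1) L = Finset.Ioc i L := Finset.Icc_add_one_left_eq_Ioc i L
  rw [hIoc1] at hden1 ⊢
  rw [hIoc2] at hden2 ⊢
  -- split products of cP
  have hsplit : ∀ F : ℕ → K, (∏ k ∈ Finset.Icc 1 L, F k) =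
      (∏ k ∈ Finset.Ioc 0 (i-1), F k) * (F i * ∏ k ∈ Finset.Ioc i L, F k) := by
    intro F
    rw [show Finset.Icc 1 L = Finset.Ioc 0 L from Finset.Icc_add_one_left_eq_Ioc 0 L,
      ← Finset.prod_Ioc_consecutive F (Nat.zero_le (i-1)) (show i-1 ≤ L by omega),
      ← Finset.prod_Ioc_consecutive F (show i-1 ≤ i by omega) hiL,
      show Finset.Ioc (i-1) i = {i} by ext x; simp only [Finset.mem_Ioc, Finset.mem_singleton]; omega,
      Finset.prod_singleton]
  -- rows above i are unchanged
  have hrow_gt : ∀ k ∈ Finset.Ioc i L,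
      (∏ j ∈ Finset.Icc 1 (mu k), (1 - q ^ ((mu k : ℤ) - (j : ℤ)) *
        t ^ ((conjP mu L j : ℤ) - (k : ℤ) + 1)))
      = ∏ j ∈ Finset.Icc 1 (lam k), (1 - q ^ ((lam k : ℤ) - (j : ℤ)) *
        t ^ ((conjP lam L j : ℤ) - (k : ℤ) + 1)) := by
    intro k hk
    rw [Finset.mem_Ioc] at hk
    have hki : k ≠ i := by omega
    have hmuk : mu k = lam k := by rw [hmu]; simp [hki]
    rw [hmuk]
    refine Finset.prod_congr rfl fun j hj => ?_
    rw [Finset.mem_Icc] at hj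
    have hjm : j ≤ lam i := le_trans hj.2 (hanti i k hi (le_of_lt hk.1))
    rw [hC1 j (by omega)]
  -- the factors for rows below i
  have hrow_lt : ∀ k ∈ Finset.Ioc 0 (i-1),
      (∏ j ∈ Finset.Icc 1 (mu k), (1 - q ^ ((mu k : ℤ) - (j : ℤ)) *
          t ^ ((conjP mu L j : ℤ) - (k : ℤ) + 1))) *
        (1 - q ^ (-((lam i:ℤ) - (lam k:ℤ) + 1)) * t ^ (-((k:ℤ) - (i:ℤ))))
      = (∏ j ∈ Finset.Icc 1 (lam k), (1 - q ^ ((lam k : ℤ) - (j : ℤ)) *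
          t ^ ((conjP lam L j : ℤ) - (k : ℤ) + 1))) *
        (1 - q ^ (-((lam i:ℤ) - (lam k:ℤ) + 1)) * t ^ (-((k:ℤ) - (i:ℤ) - 1))) := by
    intro k hk
    rw [Finset.mem_Ioc] at hk
    have hki : k ≠ i := by omega
    have hmuk : mu k = lam k := by rw [hmu]; simp [hki]
    have hi2 : 2 ≤ i := by omega
    have hadd' : lam i < lam (i-1) := by rcases hadd with h | h; omega; exact h
    have hklam : lam i + 1 ≤ lam k := by
      have := hanti k (i-1) hk.1 hk.2
      omega
    have hmem : lam i + 1 ∈ Finset.Icc 1 (lam k) := by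
      rw [Finset.mem_Icc]; omega
    rw [hmuk, ← Finset.mul_prod_erase _ _ hmem, ← Finset.mul_prod_erase _ _ hmem]
    have herase : (∏ j ∈ (Finset.Icc 1 (lam k)).erase (lam i + 1),
        (1 - q ^ ((lam k : ℤ) - (j : ℤ)) * t ^ ((conjP mu L j : ℤ) - (k : ℤ) + 1)))
        = ∏ j ∈ (Finset.Icc 1 (lam k)).erase (lam i + 1),
        (1 - q ^ ((lam k : ℤ) - (j : ℤ)) * t ^ ((conjP lam L j : ℤ) - (k : ℤ) + 1)) := by
      refine Finset.prod_congr rfl fun j hj => ?_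
      rw [Finset.mem_erase] at hj
      rw [hC1 j hj.1]
    rw [herase, hC3, hC2]
    rw [show ((lam k : ℤ) - ((lam i : ℕ) + 1 : ℕ)) = -((lam i:ℤ) - (lam k:ℤ) + 1) by push_cast; ring,
      show ((i:ℤ) - (k:ℤ) + 1) = -((k:ℤ) - (i:ℤ) - 1) by ring,
      show (((i-1:ℕ):ℤ) - (k:ℤ) + 1) = -((k:ℤ) - (i:ℤ)) by
        rw [Nat.cast_sub hi]; push_cast; ring]
    ring
  -- row i for mu
  have hmui : mu i = lam i + 1 := by rw [hmu]; simp
  have hrow_i_mu :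
      (∏ j ∈ Finset.Icc 1 (mu i), (1 - q ^ ((mu i : ℤ) - (j : ℤ)) *
        t ^ ((conjP mu L j : ℤ) - (i : ℤ) + 1)))
      = (1 - t) * ∏ j ∈ Finset.Ioc 0 (lam i), (1 - q ^ (((lam i):ℤ) + 1 - (j:ℤ)) *
        t ^ (((((Finset.Ioc i L).filter (fun k => j ≤ lam k)).card : ℕ) : ℤ) + 1)) := by
    rw [hmui, show Finset.Icc 1 (lam i + 1) = Finset.Ioc 0 (lam i + 1) from Finset.Icc_add_one_left_eq_Ioc _ _,
      Finset.prod_Ioc_succ_top (Nat.zero_le _), hC3]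
    rw [show (1 - q ^ (((lam i + 1 : ℕ) : ℤ) - ((lam i + 1 : ℕ) : ℤ)) * t ^ ((i:ℤ) - (i:ℤ) + 1)) = 1 - t by
      rw [sub_self, zpow_zero, one_mul, show (i:ℤ) - (i:ℤ) + 1 = 1 by ring, zpow_one]]
    rw [mul_comm]
    congr 1
    refine Finset.prod_congr rfl fun j hj => ?_
    rw [Finset.mem_Ioc] at hj
    rw [hC1 j (by omega), hC4 j hj.1 hj.2]
    rw [show ((lam i + 1 : ℕ) : ℤ) - (j:ℤ) = ((lam i):ℤ) + 1 - (j:ℤ) by push_cast; ring,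
      show ((i + ((Finset.Ioc i L).filter (fun k => j ≤ lam k)).card : ℕ) : ℤ) - (i:ℤ) + 1
        = ((((Finset.Ioc i L).filter (fun k => j ≤ lam k)).card : ℕ) : ℤ) + 1 by push_cast; ring]
  -- row i for lam
  have hrow_i_lam :
      (∏ j ∈ Finset.Icc 1 (lam i), (1 - q ^ ((lam i : ℤ) - (j : ℤ)) *
        t ^ ((conjP lam L j : ℤ) - (i : ℤ) + 1)))
      = ∏ j ∈ Finset.Ioc 0 (lam i), (1 - q ^ (((lam i):ℤ) - (j:ℤ)) *
        t ^ (((((Finset.Ioc i L).filter (fun k => j ≤ lam k)).card : ℕ) : ℤ) + 1)) := by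
    rw [show Finset.Icc 1 (lam i) = Finset.Ioc 0 (lam i) from Finset.Icc_add_one_left_eq_Ioc _ _]
    refine Finset.prod_congr rfl fun j hj => ?_
    rw [Finset.mem_Ioc] at hj
    rw [hC4 j hj.1 hj.2]
    rw [show ((i + ((Finset.Ioc i L).filter (fun k => j ≤ lam k)).card : ℕ) : ℤ) - (i:ℤ) + 1
        = ((((Finset.Ioc i L).filter (fun k => j ≤ lam k)).card : ℕ) : ℤ) + 1 by push_cast; ring]
  -- key telescoping identity
  have hA := lemA6 q t i (lam i) lam (fun k hk => hmono k (by omega))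
    (fun k hk => hanti i k hi (le_of_lt hk)) L hiL 0 (Nat.zero_le _) (fun _ _ _ => Nat.zero_le _)
  rw [show (((0:ℕ):ℤ)) = (0:ℤ) from rfl, sub_zero] at hA
  -- nonzeroness of denominators
  have hD1 : (∏ j ∈ Finset.Ioc 0 (i-1),
      (1 - q ^ ((lam i : ℤ) - (lam j : ℤ) + 1) * t ^ ((j : ℤ) - (i : ℤ)))) ≠ 0 :=
    Finset.prod_ne_zero_iff.mpr hden1
  have hD2 : (∏ j ∈ Finset.Ioc i L,
      (1 - q ^ ((lam i : ℤ) - (lam j : ℤ)) * t ^ ((j : ℤ) - (i : ℤ) + 1))) ≠ 0 :=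
    Finset.prod_ne_zero_iff.mpr hden2
  have hLold : (∏ k ∈ Finset.Ioc 0 (i-1),
      (1 - q ^ (-((lam i:ℤ) - (lam k:ℤ) + 1)) * t ^ (-((k:ℤ) - (i:ℤ))))) ≠ 0 := by
    refine Finset.prod_ne_zero_iff.mpr fun k hk => fun h0 => hden1 k hk ?_
    rw [aux2 q t hq ht ((lam i:ℤ) - (lam k:ℤ) + 1) ((k:ℤ) - (i:ℤ)), h0, mul_zero]
  -- unit factor identity, product form
  have hEu : (∏ k ∈ Finset.Ioc 0 (i-1),
      (t * (1 - q ^ ((lam i : ℤ) - (lam k : ℤ) + 1) * t ^ ((k : ℤ) - (i : ℤ) - 1)) *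
        (1 - q ^ (-((lam i:ℤ) - (lam k:ℤ) + 1)) * t ^ (-((k:ℤ) - (i:ℤ))))))
      = ∏ k ∈ Finset.Ioc 0 (i-1),
      ((1 - q ^ ((lam i : ℤ) - (lam k : ℤ) + 1) * t ^ ((k : ℤ) - (i : ℤ))) *
        (1 - q ^ (-((lam i:ℤ) - (lam k:ℤ) + 1)) * t ^ (-((k:ℤ) - (i:ℤ) - 1)))) := by
    refine Finset.prod_congr rfl fun k hk => ?_
    exact aux1 q t hq ht ((lam i:ℤ) - (lam k:ℤ) + 1) ((k:ℤ) - (i:ℤ))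
  rw [Finset.prod_mul_distrib, Finset.prod_mul_distrib, Finset.prod_mul_distrib,
    Finset.prod_const, Nat.card_Ioc] at hEu
  -- rows < i, product form
  have hErows := Finset.prod_congr rfl hrow_lt
  rw [Finset.prod_mul_distrib, Finset.prod_mul_distrib] at hErows
  -- power of t
  have hti : t ^ ((i:ℤ) - 1) = t ^ (i - 1 - 0 : ℕ) := by
    rw [← zpow_natCast]
    congr 1
    omega
  -- assemble
  rw [Finset.prod_div_distrib, Finset.prod_div_distrib, hti,
    ← mul_div_assoc, ← mul_div_assoc, div_mul_eq_mul_div, div_div,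
    eq_div_iff (mul_ne_zero hD1 hD2)]
  simp only [cP]
  rw [hsplit, hsplit]
  have hCgt := Finset.prod_congr rfl hrow_gt
  rw [hCgt, hrow_i_mu, hrow_i_lam]
  refine mul_right_cancel₀ hLold ?_
  linear_combination
    (((1 - t) * (∏ j ∈ Finset.Ioc 0 (lam i), (1 - q ^ (((lam i):ℤ) + 1 - (j:ℤ)) *
        t ^ (((((Finset.Ioc i L).filter (fun k => j ≤ lam k)).card : ℕ) : ℤ) + 1))) *
      (∏ x ∈ Finset.Ioc i L, ∏ j ∈ Finset.Icc 1 (lam x),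
        (1 - q ^ ((lam x:ℤ) - (j:ℤ)) * t ^ ((conjP lam L j:ℤ) - (x:ℤ) + 1))) *
      (∏ j ∈ Finset.Ioc 0 (i-1), (1 - q ^ ((lam i:ℤ) - (lam j:ℤ) + 1) * t ^ ((j:ℤ) - (i:ℤ)))) *
      (∏ j ∈ Finset.Ioc i L, (1 - q ^ ((lam i:ℤ) - (lam j:ℤ)) * t ^ ((j:ℤ) - (i:ℤ) + 1)))) * hErows
    - ((∏ k ∈ Finset.Ioc 0 (i-1), ∏ j ∈ Finset.Icc 1 (lam k),
        (1 - q ^ ((lam k:ℤ) - (j:ℤ)) * t ^ ((conjP lam L j:ℤ) - (k:ℤ) + 1))) *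
      (∏ x ∈ Finset.Ioc i L, ∏ j ∈ Finset.Icc 1 (lam x),
        (1 - q ^ ((lam x:ℤ) - (j:ℤ)) * t ^ ((conjP lam L j:ℤ) - (x:ℤ) + 1))) *
      (∏ j ∈ Finset.Ioc 0 (lam i), (1 - q ^ ((lam i:ℤ) - (j:ℤ)) *
        t ^ (((((Finset.Ioc i L).filter (fun k => j ≤ lam k)).card : ℕ) : ℤ) + 1))) *
      (1 - q ^ ((lam i:ℕ):ℤ) * t ^ ((L:ℤ) - (i:ℤ) + 1)) *
      (∏ x ∈ Finset.Ioc i L, (1 - q ^ ((lam i:ℤ) - (lam x:ℤ)) * t ^ ((x:ℤ) - (i:ℤ))))) * hEu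
    + ((∏ k ∈ Finset.Ioc 0 (i-1), ∏ j ∈ Finset.Icc 1 (lam k),
        (1 - q ^ ((lam k:ℤ) - (j:ℤ)) * t ^ ((conjP lam L j:ℤ) - (k:ℤ) + 1))) *
      (∏ x ∈ Finset.Ioc i L, ∏ j ∈ Finset.Icc 1 (lam x),
        (1 - q ^ ((lam x:ℤ) - (j:ℤ)) * t ^ ((conjP lam L j:ℤ) - (x:ℤ) + 1))) *
      (∏ j ∈ Finset.Ioc 0 (i-1), (1 - q ^ ((lam i:ℤ) - (lam j:ℤ) + 1) * t ^ ((j:ℤ) - (i:ℤ)))) *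
      (∏ k ∈ Finset.Ioc 0 (i-1), (1 - q ^ (-((lam i:ℤ) - (lam k:ℤ) + 1)) *
        t ^ (-((k:ℤ) - (i:ℤ) - 1))))) * hA)

end
end

section
/- Let λ be a partition, let i ≥ 1 satisfy i = 1 or λ_i < λ_{i−1} (so that λ+1_i is a partition), and let L be any integer with L ≥ i and L ≥ ℓ(λ). Then c'_{λ+1_i} = c'_λ · (1−q^{λ_i+1} t^{L−i}) · ∏_{j=1}^{i−1} (1−q^{λ_j−λ_i} t^{i−j})/(1−q^{λ_j−λ_i} t^{i−j−1}) · ∏_{j=i+1}^{L} (1−q^{λ_i−λ_j+1} t^{j−i−1})/(1−q^{λ_i−λ_j+1} t^{j−i}), provided all factors occurring in denominators are nonzero; in particular the right-hand side does not depend on the choice of L. -/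
open Finset

noncomputable section

/-
Adding the box `(i, λ_i + 1)` changes only the hooks in row `i` (arm `+1`) and in column
`λ_i + 1` (leg `+1`). The column contributes the first product directly. In row `i`, the
columns `c ∈ (λ_{k+1}, λ_k]` all have leg `k - i`, and on such a block the ratio of new to old
factors telescopes to `(1 - q^{λ_i - λ_{k+1} + 1} t^{k-i}) / (1 - q^{λ_i - λ_k + 1} t^{k-i})`.
Multiplying over `k = i, …, L` together with the factor `1 - q` of the new box, the blocks
telescope once more into `(1 - q^{λ_i + 1} t^{L-i})` times the second product.
-/

lemma prod_Icc_one_eq_mul_mul {M : Type*} [CommMonoid M] (f : ℕ → M) {i L : ℕ}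
    (hi : 1 ≤ i) (hiL : i ≤ L) :
    ∏ r ∈ Icc 1 L, f r = (∏ r ∈ Icc 1 (i - 1), f r) * f i * ∏ r ∈ Icc (i + 1) L, f r := by
  obtain ⟨k, rfl⟩ : ∃ k, i = k + 1 := ⟨i - 1, by omega⟩
  have hIoc (n : ℕ) : Icc 1 n = Ioc 0 n := Icc_add_one_left_eq_Ioc 0 n
  rw [Nat.add_sub_cancel, Icc_add_one_left_eq_Ioc, hIoc, hIoc, ← prod_Ioc_succ_top k.zero_le,
    prod_Ioc_consecutive f (k + 1).zero_le hiL]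

-- Both sides are `∏ c ∈ Icc p r, f c`.
lemma prod_Ioc_pred_mul_eq_mul_prod_Ioc {M : Type*} [CommMonoid M] (f : ℕ → M) {p r : ℕ}
    (hpr : p ≤ r) :
    (∏ c ∈ Ioc p r, f (c - 1)) * f r = f p * ∏ c ∈ Ioc p r, f c := by
  induction r, hpr using Nat.le_induction with
  | base => simp
  | succ r hpr ih =>
    rw [prod_Ioc_succ_top hpr, prod_Ioc_succ_top hpr, Nat.add_sub_cancel, ih, mul_assoc]

lemma conjP_eq_of_forall {lam : ℕ → ℕ} {L k c : ℕ} (hkL : k ≤ L)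
    (hle : ∀ r, 1 ≤ r → r ≤ k → c ≤ lam r) (hlt : ∀ r, k < r → lam r < c) :
    conjP lam L c = k := by
  have : (Icc 1 L).filter (fun r => c ≤ lam r) = Icc 1 k := by
    ext r
    simp only [mem_filter, mem_Icc]
    constructor
    · rintro ⟨⟨h1, -⟩, hc⟩
      exact ⟨h1, not_lt.1 fun hkr => (hlt r hkr).not_ge hc⟩
    · rintro ⟨h1, hrk⟩
      exact ⟨⟨h1, hrk.trans hkL⟩, hle r h1 hrk⟩
  rw [conjP, this, Nat.card_Icc, Nat.add_sub_cancel]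

lemma conjP_eq_of_mem_Ioc {lam : ℕ → ℕ} {L k c : ℕ} (hanti : AntitoneOn lam (Set.Ici 1))
    (hk : 1 ≤ k) (hkL : k ≤ L) (hc : c ∈ Ioc (lam (k + 1)) (lam k)) :
    conjP lam L c = k := by
  rw [mem_Ioc] at hc
  refine conjP_eq_of_forall hkL (fun r hr hrk => hc.2.trans (hanti hr hk hrk)) fun r hkr => ?_
  exact (hanti (Set.mem_Ici.2 (by omega)) (Set.mem_Ici.2 (by omega)) hkr).trans_lt hc.1

lemma apply_lt_apply_of_addable {lam : ℕ → ℕ} {i r : ℕ} (hanti : AntitoneOn lam (Set.Ici 1))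
    (hadd : i = 1 ∨ lam i < lam (i - 1)) (hr : 1 ≤ r) (hri : r < i) : lam i < lam r := by
  rcases hadd with rfl | h
  · omega
  · exact h.trans_le (hanti hr (Set.mem_Ici.2 (by omega)) (by omega))

-- `λ + 1_i`
def addBox (lam : ℕ → ℕ) (i : ℕ) : ℕ → ℕ := fun k => if k = i then lam i + 1 else lam k

lemma addBox_of_ne {lam : ℕ → ℕ} {i k : ℕ} (hk : k ≠ i) : addBox lam i k = lam k := if_neg hk

lemma conjP_addBox_of_ne (lam : ℕ → ℕ) (L : ℕ) {i c : ℕ} (hc : c ≠ lam i + 1) :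
    conjP (addBox lam i) L c = conjP lam L c := by
  unfold conjP
  congr 1
  refine filter_congr fun k _ => ?_
  by_cases hk : k = i
  · subst hk
    simp only [addBox, if_true]
    omega
  · rw [addBox_of_ne hk]

lemma conjP_addBox_self {lam : ℕ → ℕ} {L i : ℕ} (hanti : AntitoneOn lam (Set.Ici 1))
    (hadd : i = 1 ∨ lam i < lam (i - 1)) (hi : 1 ≤ i) (hiL : i ≤ L) :
    conjP (addBox lam i) L (lam i + 1) = i := by
  refine conjP_eq_of_forall hiL (fun r hr hri => ?_) fun r hir => ?_
  · rcases hri.lt_or_eq with hri | rfl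
    · rw [addBox_of_ne hri.ne]
      exact apply_lt_apply_of_addable hanti hadd hr hri
    · simp [addBox]
  · rw [addBox_of_ne hir.ne']
    exact Nat.lt_succ_of_le (hanti hi (Set.mem_Ici.2 (by omega)) hir.le)

lemma conjP_apply_add_one {lam : ℕ → ℕ} {L i : ℕ} (hanti : AntitoneOn lam (Set.Ici 1))
    (hadd : i = 1 ∨ lam i < lam (i - 1)) (hi : 1 ≤ i) (hiL : i ≤ L) :
    conjP lam L (lam i + 1) = i - 1 :=
  conjP_eq_of_forall (by omega) (fun r hr hri => apply_lt_apply_of_addable hanti hadd hr (by omega))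
    fun r hir => Nat.lt_succ_of_le (hanti hi (Set.mem_Ici.2 (by omega)) (by omega))

section

variable {K : Type*} [Field K]

def rowHook (q t : K) (lam : ℕ → ℕ) (L r : ℕ) : K :=
  ∏ c ∈ Icc 1 (lam r), (1 - q ^ ((lam r : ℤ) - (c : ℤ) + 1) * t ^ ((conjP lam L c : ℤ) - (r : ℤ)))

lemma cP'_eq_prod_rowHook (q t : K) (lam : ℕ → ℕ) (L : ℕ) :
    cP' q t lam L = ∏ r ∈ Icc 1 L, rowHook q t lam L r := rfl

lemma rowHook_addBox_of_gt (q t : K) {lam : ℕ → ℕ} {L i r : ℕ}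
    (hanti : AntitoneOn lam (Set.Ici 1)) (hi : 1 ≤ i) (hir : i < r) :
    rowHook q t (addBox lam i) L r = rowHook q t lam L r := by
  unfold rowHook
  rw [addBox_of_ne hir.ne']
  refine prod_congr rfl fun c hc => ?_
  have hri : lam r ≤ lam i := hanti hi (Set.mem_Ici.2 (by omega)) hir.le
  rw [conjP_addBox_of_ne lam L (by rw [mem_Icc] at hc; omega)]

lemma rowHook_addBox_of_lt (q t : K) {lam : ℕ → ℕ} {L i r : ℕ}
    (hanti : AntitoneOn lam (Set.Ici 1)) (hadd : i = 1 ∨ lam i < lam (i - 1))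
    (hiL : i ≤ L) (hr : 1 ≤ r) (hri : r < i) :
    rowHook q t (addBox lam i) L r * (1 - q ^ ((lam r : ℤ) - lam i) * t ^ ((i : ℤ) - r - 1)) =
      rowHook q t lam L r * (1 - q ^ ((lam r : ℤ) - lam i) * t ^ ((i : ℤ) - r)) := by
  have hmem : lam i + 1 ∈ Icc 1 (lam r) := by
    have := apply_lt_apply_of_addable hanti hadd hr hri
    rw [mem_Icc]; omega
  unfold rowHook
  rw [addBox_of_ne hri.ne, ← mul_prod_erase _ _ hmem, ← mul_prod_erase _ _ hmem,
    prod_congr rfl fun c hc => by rw [conjP_addBox_of_ne lam L (ne_of_mem_erase hc)],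
    conjP_addBox_self hanti hadd (by omega) hiL, conjP_apply_add_one hanti hadd (by omega) hiL]
  push_cast [Nat.cast_sub (by omega : 1 ≤ i)]
  ring_nf

-- On the columns `c ∈ (λ_{k+1}, λ_k]` the conjugate `λ'_c = k` is constant, so the product
-- telescopes.
lemma prod_Ioc_hook_mul (q t : K) {lam : ℕ → ℕ} {L k : ℕ} (hanti : AntitoneOn lam (Set.Ici 1))
    (hk : 1 ≤ k) (hkL : k ≤ L) (a b : ℤ) :
    (∏ c ∈ Ioc (lam (k + 1)) (lam k), (1 - q ^ (a - c + 2) * t ^ ((conjP lam L c : ℤ) - b))) *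
        (1 - q ^ (a - lam k + 1) * t ^ ((k : ℤ) - b)) =
      (1 - q ^ (a - lam (k + 1) + 1) * t ^ ((k : ℤ) - b)) *
        ∏ c ∈ Ioc (lam (k + 1)) (lam k), (1 - q ^ (a - c + 1) * t ^ ((conjP lam L c : ℤ) - b)) := by
  have hle : lam (k + 1) ≤ lam k := hanti hk (Set.mem_Ici.2 (by omega)) (by omega)
  convert prod_Ioc_pred_mul_eq_mul_prod_Ioc
    (fun c : ℕ => 1 - q ^ (a - c + 1) * t ^ ((k : ℤ) - b)) hle using 2 <;>
  refine prod_congr rfl fun c hc => ?_ <;>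
  rw [conjP_eq_of_mem_Ioc hanti hk hkL hc]
  rw [mem_Ioc] at hc
  push_cast [Nat.cast_sub (by omega : 1 ≤ c)]
  ring_nf

lemma row_identity_partial (q t : K) {lam : ℕ → ℕ} {L i n : ℕ} (hanti : AntitoneOn lam (Set.Ici 1))
    (hi : 1 ≤ i) (hin : i ≤ n) (hnL : n ≤ L) :
    (1 - q) * (∏ c ∈ Ioc (lam (n + 1)) (lam i),
        (1 - q ^ ((lam i : ℤ) - c + 2) * t ^ ((conjP lam L c : ℤ) - i))) *
        ∏ j ∈ Ioc i n, (1 - q ^ ((lam i : ℤ) - lam j + 1) * t ^ ((j : ℤ) - i)) =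
      (1 - q ^ ((lam i : ℤ) - lam (n + 1) + 1) * t ^ ((n : ℤ) - i)) *
        (∏ c ∈ Ioc (lam (n + 1)) (lam i),
          (1 - q ^ ((lam i : ℤ) - c + 1) * t ^ ((conjP lam L c : ℤ) - i))) *
        ∏ j ∈ Ioc i n, (1 - q ^ ((lam i : ℤ) - lam j + 1) * t ^ ((j : ℤ) - i - 1)) := by
  induction n, hin using Nat.le_induction with
  | base =>
    have block := prod_Ioc_hook_mul q t hanti hi hnL (lam i) i
    simp only [sub_self, zero_add, zpow_one, zpow_zero, mul_one, Ioc_self, prod_empty] at block ⊢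
    rw [mul_comm (1 - q), block]
  | succ n hin ih =>
    have hle : lam (n + 1 + 1) ≤ lam (n + 1) :=
      hanti (Set.mem_Ici.2 (by omega)) (Set.mem_Ici.2 (by omega)) (by omega)
    have hle' : lam (n + 1) ≤ lam i := hanti hi (Set.mem_Ici.2 (by omega)) (by omega)
    have block := prod_Ioc_hook_mul q t hanti (by omega) hnL (lam i) i
    rw [← prod_Ioc_consecutive _ hle hle', ← prod_Ioc_consecutive _ hle hle',
      prod_Ioc_succ_top hin, prod_Ioc_succ_top hin]
    push_cast at block ⊢
    rw [show (n : ℤ) + 1 - i - 1 = n - i by ring]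
    linear_combination congr($block * $(ih (by omega)))

lemma rowHook_addBox_self (q t : K) {lam : ℕ → ℕ} {L i : ℕ} (hanti : AntitoneOn lam (Set.Ici 1))
    (hL : lam (L + 1) = 0) (hadd : i = 1 ∨ lam i < lam (i - 1)) (hi : 1 ≤ i) (hiL : i ≤ L) :
    rowHook q t (addBox lam i) L i *
        ∏ j ∈ Icc (i + 1) L, (1 - q ^ ((lam i : ℤ) - lam j + 1) * t ^ ((j : ℤ) - i)) =
      rowHook q t lam L i * (1 - q ^ ((lam i : ℤ) + 1) * t ^ ((L : ℤ) - i)) *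
        ∏ j ∈ Icc (i + 1) L, (1 - q ^ ((lam i : ℤ) - lam j + 1) * t ^ ((j : ℤ) - i - 1)) := by
  have hIoc (n : ℕ) : Icc 1 n = Ioc 0 n := Icc_add_one_left_eq_Ioc 0 n
  have hrow : rowHook q t (addBox lam i) L i = (1 - q) *
      ∏ c ∈ Ioc 0 (lam i), (1 - q ^ ((lam i : ℤ) - c + 2) * t ^ ((conjP lam L c : ℤ) - i)) := by
    unfold rowHook
    rw [show addBox lam i i = lam i + 1 from if_pos rfl, hIoc, prod_Ioc_succ_top (Nat.zero_le _),
      conjP_addBox_self hanti hadd hi hiL, mul_comm]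
    congr 1
    · simp
    · refine prod_congr rfl fun c hc => ?_
      rw [conjP_addBox_of_ne lam L (by rw [mem_Ioc] at hc; omega)]
      push_cast
      ring_nf
  have hpartial := row_identity_partial q t (L := L) hanti hi hiL le_rfl
  rw [hL, Nat.cast_zero, sub_zero] at hpartial
  rw [hrow, rowHook, hIoc, Icc_add_one_left_eq_Ioc]
  linear_combination hpartial

end

theorem stmt7_general {K : Type*} [Field K] (q t : K)
    (lam : ℕ → ℕ) (L i : ℕ)
    (hmono : ∀ k, 1 ≤ k → lam (k + 1) ≤ lam k)
    (hL : ∀ k, L < k → lam k = 0)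
    (hi : 1 ≤ i) (hiL : i ≤ L)
    (hadd : i = 1 ∨ lam i < lam (i - 1))
    (mu : ℕ → ℕ) (hmu : mu = fun k => if k = i then lam i + 1 else lam k)
    (hden1 : ∀ j ∈ Finset.Icc 1 (i - 1),
      1 - q ^ ((lam j : ℤ) - (lam i : ℤ)) * t ^ ((i : ℤ) - (j : ℤ) - 1) ≠ 0)
    (hden2 : ∀ j ∈ Finset.Icc (i + 1) L,
      1 - q ^ ((lam i : ℤ) - (lam j : ℤ) + 1) * t ^ ((j : ℤ) - (i : ℤ)) ≠ 0) :
    cP' q t mu L =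
      cP' q t lam L *
        (1 - q ^ ((lam i : ℤ) + 1) * t ^ ((L : ℤ) - (i : ℤ))) *
        (∏ j ∈ Finset.Icc 1 (i - 1),
          (1 - q ^ ((lam j : ℤ) - (lam i : ℤ)) * t ^ ((i : ℤ) - (j : ℤ))) /
            (1 - q ^ ((lam j : ℤ) - (lam i : ℤ)) * t ^ ((i : ℤ) - (j : ℤ) - 1))) *
        ∏ j ∈ Finset.Icc (i + 1) L,
          (1 - q ^ ((lam i : ℤ) - (lam j : ℤ) + 1) * t ^ ((j : ℤ) - (i : ℤ) - 1)) /
            (1 - q ^ ((lam i : ℤ) - (lam j : ℤ) + 1) * t ^ ((j : ℤ) - (i : ℤ))) := by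
  have hanti : AntitoneOn lam (Set.Ici 1) :=
    antitoneOn_of_add_one_le Set.ordConnected_Ici fun k _ hk _ => hmono k hk
  have hrows_above : ∀ r ∈ Icc 1 (i - 1), rowHook q t mu L r = rowHook q t lam L r *
      (1 - q ^ ((lam r : ℤ) - lam i) * t ^ ((i : ℤ) - r)) /
      (1 - q ^ ((lam r : ℤ) - lam i) * t ^ ((i : ℤ) - r - 1)) := fun r hr => by
    have hr' := mem_Icc.1 hr
    exact eq_div_of_mul_eq (hden1 r hr)
      (hmu ▸ rowHook_addBox_of_lt q t hanti hadd hiL hr'.1 (by omega))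
  have hrow : rowHook q t mu L i = rowHook q t lam L i *
      (1 - q ^ ((lam i : ℤ) + 1) * t ^ ((L : ℤ) - i)) *
      (∏ j ∈ Icc (i + 1) L, (1 - q ^ ((lam i : ℤ) - lam j + 1) * t ^ ((j : ℤ) - i - 1))) /
      ∏ j ∈ Icc (i + 1) L, (1 - q ^ ((lam i : ℤ) - lam j + 1) * t ^ ((j : ℤ) - i)) :=
    eq_div_of_mul_eq (prod_ne_zero_iff.2 hden2)
      (hmu ▸ rowHook_addBox_self q t hanti (hL _ (by omega)) hadd hi hiL)
  have hrows_below : ∀ r ∈ Icc (i + 1) L, rowHook q t mu L r = rowHook q t lam L r :=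
    fun r hr => hmu ▸ rowHook_addBox_of_gt q t hanti hi (by rw [mem_Icc] at hr; omega)
  rw [cP'_eq_prod_rowHook, cP'_eq_prod_rowHook, prod_Icc_one_eq_mul_mul _ hi hiL,
    prod_Icc_one_eq_mul_mul _ hi hiL, prod_congr rfl hrows_above, hrow,
    prod_congr rfl hrows_below, prod_div_distrib, prod_div_distrib, prod_div_distrib,
    prod_mul_distrib]
  ring

theorem stmt7 {K : Type*} [Field K] (q t : K) (hq : q ≠ 0) (ht : t ≠ 0)
    (lam : ℕ → ℕ) (L i : ℕ)
    (hmono : ∀ k, 1 ≤ k → lam (k + 1) ≤ lam k)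
    (hL : ∀ k, L < k → lam k = 0)
    (hi : 1 ≤ i) (hiL : i ≤ L)
    (hadd : i = 1 ∨ lam i < lam (i - 1))
    (mu : ℕ → ℕ) (hmu : mu = fun k => if k = i then lam i + 1 else lam k)
    (hden1 : ∀ j ∈ Finset.Icc 1 (i - 1),
      1 - q ^ ((lam j : ℤ) - (lam i : ℤ)) * t ^ ((i : ℤ) - (j : ℤ) - 1) ≠ 0)
    (hden2 : ∀ j ∈ Finset.Icc (i + 1) L,
      1 - q ^ ((lam i : ℤ) - (lam j : ℤ) + 1) * t ^ ((j : ℤ) - (i : ℤ)) ≠ 0) :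
    cP' q t mu L =
      cP' q t lam L *
        (1 - q ^ ((lam i : ℤ) + 1) * t ^ ((L : ℤ) - (i : ℤ))) *
        (∏ j ∈ Finset.Icc 1 (i - 1),
          (1 - q ^ ((lam j : ℤ) - (lam i : ℤ)) * t ^ ((i : ℤ) - (j : ℤ))) /
            (1 - q ^ ((lam j : ℤ) - (lam i : ℤ)) * t ^ ((i : ℤ) - (j : ℤ) - 1))) *
        ∏ j ∈ Finset.Icc (i + 1) L,
          (1 - q ^ ((lam i : ℤ) - (lam j : ℤ) + 1) * t ^ ((j : ℤ) - (i : ℤ) - 1)) /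
            (1 - q ^ ((lam i : ℤ) - (lam j : ℤ) + 1) * t ^ ((j : ℤ) - (i : ℤ))) :=
  stmt7_general q t lam L i hmono hL hi hiL hadd mu hmu hden1 hden2
end
end

section
/- Let λ be a partition with ℓ = ℓ(λ) and let w be an invertible element of K such that every factor occurring in a denominator below is nonzero. Then 1/(1−t^{−ℓ} w) · ∏_{i=1}^{ℓ} (1−q^{λ_i} t^{−i} w)/(1−q^{λ_i} t^{1−i} w) + w^{−1} · 1/(1−t^{ℓ} w^{−1}) · ∏_{i=1}^{ℓ} (1−q^{−λ_i} t^{i} w^{−1})/(1−q^{−λ_i} t^{i−1} w^{−1}) = 0. -/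
/-!
With `a_i = q^{λ_i} t^{-i} w`, the `i`-th factor of the first product is `(1 - a_i)/(1 - t a_i)`
and that of the second is `(1 - a_i⁻¹)/(1 - (t a_i)⁻¹) = t (1 - a_i)/(1 - t a_i)`, so the second
product is `t^ℓ` times the first; likewise `w⁻¹ (1 - t^ℓ w⁻¹)⁻¹ = -t^{-ℓ} (1 - t^{-ℓ} w)⁻¹`, and the
two summands cancel.
-/

open Finset

section

variable {K : Type*} [Field K]

theorem one_sub_inv_eq_neg_inv_mul {a : K} (ha : a ≠ 0) : 1 - a⁻¹ = -a⁻¹ * (1 - a) := by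
  rw [neg_mul, mul_sub, mul_one, inv_mul_cancel₀ ha]
  ring

theorem one_sub_inv_div_one_sub_inv_mul {a t : K} (ha : a ≠ 0) (ht : t ≠ 0) :
    (1 - a⁻¹) / (1 - (t * a)⁻¹) = t * ((1 - a) / (1 - t * a)) := by
  rw [one_sub_inv_eq_neg_inv_mul ha, one_sub_inv_eq_neg_inv_mul (mul_ne_zero ht ha),
    mul_div_mul_comm, neg_div_neg_eq, mul_inv, div_mul_cancel_right₀ (inv_ne_zero ha), inv_inv]

theorem prod_one_sub_inv_div_one_sub_inv_mul {ι : Type*} (s : Finset ι) (a : ι → K)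
    (ha : ∀ i ∈ s, a i ≠ 0) {t : K} (ht : t ≠ 0) :
    ∏ i ∈ s, (1 - (a i)⁻¹) / (1 - (t * a i)⁻¹) = t ^ #s * ∏ i ∈ s, (1 - a i) / (1 - t * a i) := by
  rw [← prod_const, ← prod_mul_distrib]
  exact prod_congr rfl fun i hi => one_sub_inv_div_one_sub_inv_mul (ha i hi) ht

theorem inv_mul_inv_one_sub_mul_inv {T w : K} (hT : T ≠ 0) (hw : w ≠ 0) :
    w⁻¹ * (1 - T * w⁻¹)⁻¹ = -T⁻¹ * (1 - T⁻¹ * w)⁻¹ := by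
  have hTw : T * w⁻¹ = (T⁻¹ * w)⁻¹ := by rw [mul_inv, inv_inv]
  rw [hTw, one_sub_inv_eq_neg_inv_mul (mul_ne_zero (inv_ne_zero hT) hw), mul_inv, inv_neg, inv_inv]
  field_simp

end

theorem stmt9_general {K : Type*} [Field K] (q t : K) (hq : q ≠ 0) (ht : t ≠ 0)
    (w : K) (hw : w ≠ 0)
    (lam : ℕ → ℕ) (l : ℕ) :
    (1 - t ^ (-(l : ℤ)) * w)⁻¹ *
        (∏ i ∈ Finset.Icc 1 l,
          (1 - q ^ (lam i : ℤ) * t ^ (-(i : ℤ)) * w) /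
            (1 - q ^ (lam i : ℤ) * t ^ (1 - (i : ℤ)) * w)) +
      w⁻¹ * (1 - t ^ (l : ℤ) * w⁻¹)⁻¹ *
        (∏ i ∈ Finset.Icc 1 l,
          (1 - q ^ (-(lam i : ℤ)) * t ^ (i : ℤ) * w⁻¹) /
            (1 - q ^ (-(lam i : ℤ)) * t ^ ((i : ℤ) - 1) * w⁻¹)) = 0 := by
  let a : ℕ → K := fun i => q ^ (lam i : ℤ) * t ^ (-(i : ℤ)) * w
  have ha (i : ℕ) : a i ≠ 0 := by simp [a, hq, ht, hw]
  have hshift (i : ℕ) : q ^ (lam i : ℤ) * t ^ (1 - (i : ℤ)) * w = t * a i := by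
    simp only [a, zpow_sub₀ ht, zpow_neg, zpow_one]; field_simp
  have hinv (i : ℕ) : q ^ (-(lam i : ℤ)) * t ^ (i : ℤ) * w⁻¹ = (a i)⁻¹ := by
    simp only [a, zpow_neg, mul_inv, inv_inv]
  have hinv_shift (i : ℕ) : q ^ (-(lam i : ℤ)) * t ^ ((i : ℤ) - 1) * w⁻¹ = (t * a i)⁻¹ := by
    rw [← hshift]; simp only [zpow_neg, zpow_sub₀ ht, mul_inv, inv_div]
  have hdef (i : ℕ) : q ^ (lam i : ℤ) * t ^ (-(i : ℤ)) * w = a i := rfl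
  clear_value a
  simp only [hdef, hshift, hinv, hinv_shift]
  rw [prod_one_sub_inv_div_one_sub_inv_mul _ _ (fun i _ => ha i) ht, Nat.card_Icc,
    zpow_neg, zpow_natCast, inv_mul_inv_one_sub_mul_inv (pow_ne_zero l ht) hw, add_tsub_cancel_right]
  set A := (1 - (t ^ l)⁻¹ * w)⁻¹
  set P := ∏ i ∈ Icc 1 l, (1 - a i) / (1 - t * a i)
  linear_combination (-(A * P)) * inv_mul_cancel₀ (pow_ne_zero l ht)

theorem stmt9 {K : Type*} [Field K] (q t : K) (hq : q ≠ 0) (ht : t ≠ 0)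
    (w : K) (hw : w ≠ 0)
    (lam : ℕ → ℕ) (l : ℕ)
    (hmono : ∀ k, 1 ≤ k → lam (k + 1) ≤ lam k)
    (hlen : ∀ k, l < k → lam k = 0)
    (hlpos : l = 0 ∨ lam l ≠ 0)
    (hd0 : 1 - t ^ (-(l : ℤ)) * w ≠ 0)
    (hd0' : 1 - t ^ (l : ℤ) * w⁻¹ ≠ 0)
    (hd : ∀ i ∈ Finset.Icc 1 l,
      1 - q ^ (lam i : ℤ) * t ^ (1 - (i : ℤ)) * w ≠ 0 ∧
      1 - q ^ (-(lam i : ℤ)) * t ^ ((i : ℤ) - 1) * w⁻¹ ≠ 0) :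
    (1 - t ^ (-(l : ℤ)) * w)⁻¹ *
        (∏ i ∈ Finset.Icc 1 l,
          (1 - q ^ (lam i : ℤ) * t ^ (-(i : ℤ)) * w) /
            (1 - q ^ (lam i : ℤ) * t ^ (1 - (i : ℤ)) * w)) +
      w⁻¹ * (1 - t ^ (l : ℤ) * w⁻¹)⁻¹ *
        (∏ i ∈ Finset.Icc 1 l,
          (1 - q ^ (-(lam i : ℤ)) * t ^ (i : ℤ) * w⁻¹) /
            (1 - q ^ (-(lam i : ℤ)) * t ^ ((i : ℤ) - 1) * w⁻¹)) = 0 :=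
  stmt9_general q t hq ht w hw lam l
end

section
/- Let λ be a partition with ℓ = ℓ(λ) and let w be an invertible element of K such that every factor occurring in a denominator below is nonzero. Then (1−q^{−1} t^{1−ℓ} w) · ∏_{i=1}^{ℓ} (1−q^{λ_i−1} t^{2−i} w)/(1−q^{λ_i−1} t^{1−i} w) + q^{−1} t · w · (1−q t^{ℓ−1} w^{−1}) · ∏_{i=1}^{ℓ} (1−q^{1−λ_i} t^{i−2} w^{−1})/(1−q^{1−λ_i} t^{i−1} w^{−1}) = 0. -/
open Finset

noncomputable section

theorem stmt10 {K : Type*} [Field K] (q t : K) (hq : q ≠ 0) (ht : t ≠ 0)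
    (w : K) (hw : w ≠ 0)
    (lam : ℕ → ℕ) (l : ℕ)
    (hmono : ∀ k, 1 ≤ k → lam (k + 1) ≤ lam k)
    (hlen : ∀ k, l < k → lam k = 0)
    (hlpos : l = 0 ∨ lam l ≠ 0)
    (hd : ∀ i ∈ Finset.Icc 1 l,
      1 - q ^ ((lam i : ℤ) - 1) * t ^ (1 - (i : ℤ)) * w ≠ 0 ∧
      1 - q ^ (1 - (lam i : ℤ)) * t ^ ((i : ℤ) - 1) * w⁻¹ ≠ 0) :
    (1 - q⁻¹ * t ^ (1 - (l : ℤ)) * w) *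
        (∏ i ∈ Finset.Icc 1 l,
          (1 - q ^ ((lam i : ℤ) - 1) * t ^ (2 - (i : ℤ)) * w) /
            (1 - q ^ ((lam i : ℤ) - 1) * t ^ (1 - (i : ℤ)) * w)) +
      q⁻¹ * t * w * (1 - q * t ^ ((l : ℤ) - 1) * w⁻¹) *
        (∏ i ∈ Finset.Icc 1 l,
          (1 - q ^ (1 - (lam i : ℤ)) * t ^ ((i : ℤ) - 2) * w⁻¹) /
            (1 - q ^ (1 - (lam i : ℤ)) * t ^ ((i : ℤ) - 1) * w⁻¹)) = 0 := by
  have hterm : ∀ i ∈ Finset.Icc 1 l,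
      (1 - q ^ (1 - (lam i : ℤ)) * t ^ ((i : ℤ) - 2) * w⁻¹) /
        (1 - q ^ (1 - (lam i : ℤ)) * t ^ ((i : ℤ) - 1) * w⁻¹)
      = t⁻¹ * ((1 - q ^ ((lam i : ℤ) - 1) * t ^ (2 - (i : ℤ)) * w) /
          (1 - q ^ ((lam i : ℤ) - 1) * t ^ (1 - (i : ℤ)) * w)) := by
    intro i hi
    obtain ⟨h1, h2⟩ := hd i hi
    set a := q ^ ((lam i : ℤ) - 1) * t ^ (1 - (i : ℤ)) * w with ha
    have haz : a ≠ 0 :=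
      mul_ne_zero (mul_ne_zero (zpow_ne_zero _ hq) (zpow_ne_zero _ ht)) hw
    have e1 : q ^ (1 - (lam i : ℤ)) * t ^ ((i : ℤ) - 1) * w⁻¹ = a⁻¹ := by
      rw [ha, mul_inv, mul_inv, ← zpow_neg, ← zpow_neg,
        show -((lam i : ℤ) - 1) = 1 - (lam i : ℤ) by ring,
        show -(1 - (i : ℤ)) = (i : ℤ) - 1 by ring]
    have e2 : q ^ (1 - (lam i : ℤ)) * t ^ ((i : ℤ) - 2) * w⁻¹ = t⁻¹ * a⁻¹ := by
      rw [show ((i : ℤ) - 2) = (-1) + ((i : ℤ) - 1) by ring, zpow_add₀ ht,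
        zpow_neg_one, ← e1]
      ring
    have e3 : q ^ ((lam i : ℤ) - 1) * t ^ (2 - (i : ℤ)) * w = t * a := by
      rw [ha, show (2 - (i : ℤ)) = 1 + (1 - (i : ℤ)) by ring, zpow_add₀ ht,
        zpow_one]
      ring
    rw [e1, e2, e3]
    rw [e1] at h2
    clear_value a
    clear ha e1 e2 e3 hd hi
    rw [← mul_div_assoc, div_eq_div_iff h2 h1]
    field_simp
    ring
  rw [Finset.prod_congr rfl hterm, Finset.prod_mul_distrib, Finset.prod_const,
    Nat.card_Icc, Nat.add_sub_cancel]
  have hl1 : t ^ (1 - (l : ℤ)) = t / t ^ l := by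
    rw [zpow_sub₀ ht, zpow_one, zpow_natCast]
  have hl2 : t ^ ((l : ℤ) - 1) = t ^ l / t := by
    rw [zpow_sub₀ ht, zpow_one, zpow_natCast]
  have htl : (t : K) ^ l ≠ 0 := pow_ne_zero _ ht
  have hc : (1 - q⁻¹ * t ^ (1 - (l : ℤ)) * w) +
      q⁻¹ * t * w * (1 - q * t ^ ((l : ℤ) - 1) * w⁻¹) * t⁻¹ ^ l = 0 := by
    rw [hl1, hl2, inv_pow]
    field_simp
    ring
  set P := ∏ i ∈ Finset.Icc 1 l,
      (1 - q ^ ((lam i : ℤ) - 1) * t ^ (2 - (i : ℤ)) * w) /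
        (1 - q ^ ((lam i : ℤ) - 1) * t ^ (1 - (i : ℤ)) * w) with hP
  linear_combination P * hc

end
end

section
/- Let λ and μ be partitions and let Q, T, x be invertible elements of K, with q = Q² and t = T². Then N_{λ,μ}((Q/T)·x) = N_{μ,λ}((Q/T)·x^{−1}) · x^{|λ|+|μ|} · f_λ · f_μ^{−1}. -/
open Finset

noncomputable section

/-- `|λ| = Σ_i λ_i`, computed using rows `1,…,L`. -/
def sizeP (lam : ℕ → ℕ) (L : ℕ) : ℕ := ∑ i ∈ Finset.Icc 1 L, lam i

/-- `n(λ) = Σ_{i≥1} (i-1) λ_i`, computed using rows `1,…,L`. -/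
def nP (lam : ℕ → ℕ) (L : ℕ) : ℕ := ∑ i ∈ Finset.Icc 1 L, (i - 1) * lam i

/-- `n(λ') = Σ_{j≥1} (j-1) λ'_j`, computed using rows `1,…,L`. -/
def nconj (lam : ℕ → ℕ) (L : ℕ) : ℕ :=
  ∑ j ∈ Finset.Icc 1 (lam 1), (j - 1) * conjP lam L j

/-- The Nekrasov factor `N_{λ,μ}(u)`, computed using rows `1,…,L`. -/
def Nek {K : Type*} [Field K] (q t : K) (lam mu : ℕ → ℕ) (L : ℕ) (u : K) : K :=
  (∏ i ∈ Finset.Icc 1 L, ∏ j ∈ Finset.Icc 1 (lam i),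
    (1 - u * q ^ (-(mu i : ℤ) + (j : ℤ) - 1) * t ^ (-(conjP lam L j : ℤ) + (i : ℤ)))) *
  ∏ k ∈ Finset.Icc 1 L, ∏ l ∈ Finset.Icc 1 (mu k),
    (1 - u * q ^ ((lam k : ℤ) - (l : ℤ)) * t ^ ((conjP mu L l : ℤ) - (k : ℤ) + 1))

/-- The framing factor `f_λ = (-1)^{|λ|} q^{n(λ')} Q^{|λ|} t^{-n(λ)} T^{-|λ|}`,
where `Q² = q` and `T² = t`. -/
def framing {K : Type*} [Field K] (q t Q T : K) (lam : ℕ → ℕ) (L : ℕ) : K :=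
  (-1 : K) ^ sizeP lam L * q ^ nconj lam L * Q ^ sizeP lam L *
    t ^ (-(nP lam L : ℤ)) * T ^ (-(sizeP lam L : ℤ))

/-!
Every factor of a Nekrasov factor has the form `1 - a` with `a` a monomial, and
`1 - a = (-a) (1 - a⁻¹)`. For `u = (Q/T) x` and `u' = (Q/T) x⁻¹` we have `u u' = q / t`, so
`(u q^A t^B)⁻¹ = u' q^(-A-1) t^(-B+1)`: the factor of `N_{λ,μ}(u)` at a box of `λ` (resp. `μ`)
turns into the factor of `N_{μ,λ}(u')` at the same box. The leftover monomials multiply to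
`x^{|λ|+|μ|} f_λ / f_μ`: summing over the boxes `(i, j)` of `λ`, `Σ (j - 1) = n(λ')` and
`Σ (λ'_j - i) = Σ (i - 1) = n(λ)` (reflect each column), while the cross terms
`Σ_{(i,j) ∈ λ} μ_i = Σ_i λ_i μ_i = Σ_{(k,l) ∈ μ} λ_k` cancel.
-/

def boxes (lam : ℕ → ℕ) (L : ℕ) : Finset (Σ _ : ℕ, ℕ) :=
  (Icc 1 L).sigma fun i => Icc 1 (lam i)

section Boxes

variable (lam : ℕ → ℕ) (L : ℕ)

lemma card_boxes : #(boxes lam L) = sizeP lam L := by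
  simp [boxes, sizeP, card_sigma]

lemma sum_boxes_fst_sub_one : ∑ b ∈ boxes lam L, ((b.1 : ℤ) - 1) = nP lam L := by
  rw [boxes, sum_sigma, nP]
  push_cast
  refine sum_congr rfl fun i hi => ?_
  rw [sum_const, Nat.card_Icc, nsmul_eq_mul, Nat.cast_sub (mem_Icc.1 hi).1]
  push_cast
  ring

lemma sum_boxes_rowLength_comm (mu : ℕ → ℕ) :
    ∑ b ∈ boxes lam L, (mu b.1 : ℤ) = ∑ b ∈ boxes mu L, (lam b.1 : ℤ) := by
  simp only [boxes, sum_sigma, sum_const, Nat.card_Icc, Nat.add_sub_cancel, nsmul_eq_mul,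
    mul_comm]

lemma sum_Icc_sub_eq_sum_Icc_sub_one (c : ℕ) :
    ∑ i ∈ Icc 1 c, ((c : ℤ) - i) = ∑ i ∈ Icc 1 c, ((i : ℤ) - 1) :=
  sum_nbij' (c + 1 - ·) (c + 1 - ·) (by intro i; simp; omega) (by intro i; simp; omega)
    (by intro i; simp; omega) (by intro i; simp; omega) (by intro i hi; simp at hi; omega)

variable {lam} (hmono : ∀ k, 1 ≤ k → lam (k + 1) ≤ lam k)
include hmono

lemma Icc_filter_le_eq_Icc_conjP (j : ℕ) :
    (Icc 1 L).filter (fun i => j ≤ lam i) = Icc 1 (conjP lam L j) := by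
  have hanti : AntitoneOn lam {i | 1 ≤ i} := antitoneOn_nat_Ici_of_succ_le hmono
  set S := (Icc 1 L).filter (fun i => j ≤ lam i)
  have hmem : ∀ i, i ∈ S ↔ 1 ≤ i ∧ i ≤ L ∧ j ≤ lam i := by simp [S, and_assoc]
  change S = Icc 1 #S
  rcases S.eq_empty_or_nonempty with hS | hS
  · simp [hS]
  have hmax := (hmem _).1 (S.max'_mem hS)
  have : S = Icc 1 (S.max' hS) := by
    ext i
    rw [mem_Icc]
    refine ⟨fun hi => ⟨((hmem i).1 hi).1, S.le_max' i hi⟩, fun ⟨h1, h2⟩ => (hmem i).2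
      ⟨h1, h2.trans hmax.2.1, hmax.2.2.trans (hanti h1 hmax.1 h2)⟩⟩
  rw [this, Nat.card_Icc, Nat.add_sub_cancel]

lemma sum_boxes_eq_sum_cols {M : Type*} [AddCommMonoid M] (f : ℕ → ℕ → M) :
    ∑ b ∈ boxes lam L, f b.1 b.2 =
      ∑ j ∈ Icc 1 (lam 1), ∑ i ∈ Icc 1 (conjP lam L j), f i j := by
  have hanti : AntitoneOn lam {i | 1 ≤ i} := antitoneOn_nat_Ici_of_succ_le hmono
  rw [boxes, sum_sigma]
  refine sum_comm' fun i j => ?_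
  rw [← Icc_filter_le_eq_Icc_conjP L hmono j]
  simp only [mem_Icc, mem_filter]
  constructor
  · rintro ⟨⟨hi1, hiL⟩, hj1, hji⟩
    exact ⟨⟨⟨hi1, hiL⟩, hji⟩, hj1, hji.trans (hanti (le_refl 1) hi1 hi1)⟩
  · rintro ⟨⟨⟨hi1, hiL⟩, hji⟩, hj1, -⟩
    exact ⟨⟨hi1, hiL⟩, hj1, hji⟩

lemma sum_boxes_snd_sub_one : ∑ b ∈ boxes lam L, ((b.2 : ℤ) - 1) = nconj lam L := by
  rw [sum_boxes_eq_sum_cols L hmono fun _ j => (j : ℤ) - 1, nconj]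
  push_cast
  refine sum_congr rfl fun j hj => ?_
  rw [sum_const, Nat.card_Icc, nsmul_eq_mul, Nat.cast_sub (mem_Icc.1 hj).1]
  push_cast
  ring

lemma sum_boxes_conjP_sub_fst :
    ∑ b ∈ boxes lam L, ((conjP lam L b.2 : ℤ) - b.1) = nP lam L := by
  rw [← sum_boxes_fst_sub_one, sum_boxes_eq_sum_cols L hmono fun i j => (conjP lam L j : ℤ) - i,
    sum_boxes_eq_sum_cols L hmono fun i _ => (i : ℤ) - 1]
  exact sum_congr rfl fun j _ => sum_Icc_sub_eq_sum_Icc_sub_one _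

end Boxes

section Monomials

variable {K : Type*} [Field K]

lemma one_sub_eq_neg_mul_one_sub {a a' : K} (h : a * a' = 1) : 1 - a = -a * (1 - a') := by
  linear_combination -h

lemma prod_zpow_eq_zpow_sum {ι : Type*} {a : K} (ha : a ≠ 0) (s : Finset ι) (f : ι → ℤ) :
    ∏ i ∈ s, a ^ f i = a ^ ∑ i ∈ s, f i := by
  classical
  induction s using Finset.induction_on with
  | empty => simp
  | insert i s hi ih => rw [prod_insert hi, sum_insert hi, zpow_add₀ ha, ih]

lemma prod_one_sub_monomial {ι : Type*} (s : Finset ι) {q t u u' : K} (hq : q ≠ 0) (ht : t ≠ 0)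
    (huu' : u * u' = q / t) (A B A' B' : ι → ℤ) (hA : ∀ b, A' b = -A b - 1)
    (hB : ∀ b, B' b = -B b + 1) :
    ∏ b ∈ s, (1 - u * q ^ A b * t ^ B b) =
      (-u) ^ #s * q ^ (∑ b ∈ s, A b) * t ^ (∑ b ∈ s, B b) *
        ∏ b ∈ s, (1 - u' * q ^ A' b * t ^ B' b) := by
  have hinv (b : ι) : u * q ^ A b * t ^ B b * (u' * q ^ A' b * t ^ B' b) = 1 := by
    rw [hA, hB, zpow_sub₀ hq, zpow_add₀ ht, zpow_neg, zpow_neg, zpow_one, zpow_one]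
    calc _ = u * u' * (q ^ A b * (q ^ A b)⁻¹) * (t ^ B b * (t ^ B b)⁻¹) * t / q := by ring
      _ = 1 := by
        rw [huu', mul_inv_cancel₀ (zpow_ne_zero _ hq), mul_inv_cancel₀ (zpow_ne_zero _ ht)]
        field_simp
  rw [prod_congr rfl fun b _ => one_sub_eq_neg_mul_one_sub (hinv b)]
  simp only [← neg_mul, prod_mul_distrib, prod_const, prod_zpow_eq_zpow_sum hq,
    prod_zpow_eq_zpow_sum ht]

end Monomials

theorem Nek_eq_mul_Nek_swap {K : Type*} [Field K] {q t u u' : K} (hq : q ≠ 0) (ht : t ≠ 0)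
    (huu' : u * u' = q / t) {lam mu : ℕ → ℕ} (L : ℕ)
    (hlam : ∀ k, 1 ≤ k → lam (k + 1) ≤ lam k) (hmu : ∀ k, 1 ≤ k → mu (k + 1) ≤ mu k) :
    Nek q t lam mu L u =
      (-u) ^ (sizeP lam L + sizeP mu L) *
        q ^ ((nconj lam L : ℤ) - nconj mu L - sizeP mu L) *
        t ^ ((nP mu L : ℤ) + sizeP mu L - nP lam L) * Nek q t mu lam L u' := by
  have hq_exp : ∑ b ∈ boxes lam L, (-(mu b.1 : ℤ) + b.2 - 1) +
      ∑ b ∈ boxes mu L, ((lam b.1 : ℤ) - b.2)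
      = (nconj lam L : ℤ) - nconj mu L - sizeP mu L := by
    have hlam := sum_boxes_snd_sub_one L hlam
    have hmu := sum_boxes_snd_sub_one L hmu
    have hrow := sum_boxes_rowLength_comm lam L mu
    simp only [sum_add_distrib, sum_sub_distrib, sum_neg_distrib, sum_const, card_boxes,
      nsmul_eq_mul, mul_one] at hlam hmu ⊢
    linarith
  have ht_exp : ∑ b ∈ boxes lam L, (-(conjP lam L b.2 : ℤ) + b.1) +
      ∑ b ∈ boxes mu L, ((conjP mu L b.2 : ℤ) - b.1 + 1)
      = (nP mu L : ℤ) + sizeP mu L - nP lam L := by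
    have hlam := sum_boxes_conjP_sub_fst L hlam
    have hmu := sum_boxes_conjP_sub_fst L hmu
    simp only [sum_add_distrib, sum_sub_distrib, sum_neg_distrib, sum_const, card_boxes,
      nsmul_eq_mul, mul_one] at hlam hmu ⊢
    linarith
  simp only [Nek, prod_sigma', ← boxes.eq_1]
  rw [prod_one_sub_monomial (boxes lam L) hq ht huu'
      (fun b => -(mu b.1 : ℤ) + b.2 - 1) (fun b => -(conjP lam L b.2 : ℤ) + b.1)
      (fun b => (mu b.1 : ℤ) - b.2) (fun b => (conjP lam L b.2 : ℤ) - b.1 + 1)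
      (fun _ => by ring) (fun _ => by ring),
    prod_one_sub_monomial (boxes mu L) hq ht huu'
      (fun b => (lam b.1 : ℤ) - b.2) (fun b => (conjP mu L b.2 : ℤ) - b.1 + 1)
      (fun b => -(lam b.1 : ℤ) + b.2 - 1) (fun b => -(conjP mu L b.2 : ℤ) + b.1)
      (fun _ => by ring) (fun _ => by ring),
    card_boxes, card_boxes, ← hq_exp, ← ht_exp, zpow_add₀ hq, zpow_add₀ ht, pow_add]
  ring

lemma framing_mul_inv_framing {K : Type*} [Field K] {Q T : K} (hQ : Q ≠ 0) (hT : T ≠ 0) (x : K)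
    (lam mu : ℕ → ℕ) (L : ℕ) :
    x ^ (sizeP lam L + sizeP mu L) * framing (Q ^ 2) (T ^ 2) Q T lam L *
        (framing (Q ^ 2) (T ^ 2) Q T mu L)⁻¹ =
      (-(Q / T * x)) ^ (sizeP lam L + sizeP mu L) *
        (Q ^ 2) ^ ((nconj lam L : ℤ) - nconj mu L - sizeP mu L) *
        (T ^ 2) ^ ((nP mu L : ℤ) + sizeP mu L - nP lam L) := by
  simp only [framing, zpow_sub₀ (pow_ne_zero 2 hQ), zpow_sub₀ (pow_ne_zero 2 hT),
    zpow_add₀ (pow_ne_zero 2 hT), zpow_neg, zpow_natCast, mul_inv, ← inv_pow (-1 : K), inv_neg_one,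
    neg_pow (Q / T * x), mul_pow, div_pow]
  field_simp
  ring

theorem stmt11_general {K : Type*} [Field K] (Q T x : K)
    (hQ : Q ≠ 0) (hT : T ≠ 0) (hx : x ≠ 0)
    (q t : K) (hq : q = Q ^ 2) (ht : t = T ^ 2)
    (lam mu : ℕ → ℕ) (L : ℕ)
    (hmono : ∀ k, 1 ≤ k → lam (k + 1) ≤ lam k)
    (hmono' : ∀ k, 1 ≤ k → mu (k + 1) ≤ mu k) :
    Nek q t lam mu L (Q / T * x) =
      Nek q t mu lam L (Q / T * x⁻¹) * x ^ (sizeP lam L + sizeP mu L) *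
        framing q t Q T lam L * (framing q t Q T mu L)⁻¹ := by
  subst hq ht
  have huu' : Q / T * x * (Q / T * x⁻¹) = Q ^ 2 / T ^ 2 := by field_simp
  rw [Nek_eq_mul_Nek_swap (pow_ne_zero 2 hQ) (pow_ne_zero 2 hT) huu' L hmono hmono']
  linear_combination
    -Nek (Q ^ 2) (T ^ 2) mu lam L (Q / T * x⁻¹) * framing_mul_inv_framing hQ hT x lam mu L

theorem stmt11 {K : Type*} [Field K] (Q T x : K)
    (hQ : Q ≠ 0) (hT : T ≠ 0) (hx : x ≠ 0)
    (q t : K) (hq : q = Q ^ 2) (ht : t = T ^ 2)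
    (lam mu : ℕ → ℕ) (L : ℕ)
    (hmono : ∀ k, 1 ≤ k → lam (k + 1) ≤ lam k)
    (hmono' : ∀ k, 1 ≤ k → mu (k + 1) ≤ mu k)
    (hL : ∀ k, L < k → lam k = 0)
    (hL' : ∀ k, L < k → mu k = 0) :
    Nek q t lam mu L (Q / T * x) =
      Nek q t mu lam L (Q / T * x⁻¹) * x ^ (sizeP lam L + sizeP mu L) *
        framing q t Q T lam L * (framing q t Q T mu L)⁻¹ :=
  stmt11_general Q T x hQ hT hx q t hq ht lam mu L hmono hmono'
end
end

section
/- For every partition λ one has c_λ · c'_λ = (−1)^{|λ|} q^{n(λ')+|λ|} t^{n(λ)} · N_{λ,λ}(1) in K. -/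
open Finset

noncomputable section

lemma prod_zpow_sum {K : Type*} [Field K] (x : K) (hx : x ≠ 0) {ι : Type*}
    (s : Finset ι) (f : ι → ℤ) :
    ∏ i ∈ s, x ^ f i = x ^ (∑ i ∈ s, f i) := by
  induction s using Finset.cons_induction with
  | empty => simp
  | cons a s ha ih => simp [Finset.prod_cons, Finset.sum_cons, zpow_add₀ hx, ih]

lemma conj_filter_eq (lam : ℕ → ℕ) (L : ℕ)
    (hm : ∀ a b : ℕ, 1 ≤ a → a ≤ b → lam b ≤ lam a) (j : ℕ) :
    (Icc 1 L).filter (fun k => j ≤ lam k) = Icc 1 (conjP lam L j) := by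
  ext k
  simp only [mem_filter, mem_Icc, conjP]
  constructor
  · rintro ⟨⟨h1, hLk⟩, hj⟩
    refine ⟨h1, ?_⟩
    have hsub : Icc 1 k ⊆ (Icc 1 L).filter (fun k => j ≤ lam k) := by
      intro x hx
      simp only [mem_Icc] at hx
      simp only [mem_filter, mem_Icc]
      exact ⟨⟨hx.1, le_trans hx.2 hLk⟩, le_trans hj (hm x k hx.1 hx.2)⟩
    have := Finset.card_le_card hsub
    simpa using this
  · rintro ⟨h1, hcard⟩
    have hsub : ((Icc 1 L).filter (fun k => j ≤ lam k)) ⊆ Icc 1 L :=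
      Finset.filter_subset _ _
    have hcL : ((Icc 1 L).filter (fun k => j ≤ lam k)).card ≤ L := by
      have := Finset.card_le_card hsub
      simpa using this
    have hkL : k ≤ L := le_trans hcard hcL
    refine ⟨⟨h1, hkL⟩, ?_⟩
    by_contra hlt
    push_neg at hlt
    have hsub2 : ((Icc 1 L).filter (fun k => j ≤ lam k)) ⊆ Icc 1 (k - 1) := by
      intro x hx
      simp only [mem_filter, mem_Icc] at hx
      simp only [mem_Icc]
      refine ⟨hx.1.1, ?_⟩
      by_contra hxk
      push_neg at hxk
      have : lam x ≤ lam k := hm k x h1 (by omega)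
      omega
    have := Finset.card_le_card hsub2
    simp only [Nat.card_Icc] at this
    omega

lemma swap_sum (lam : ℕ → ℕ) (L : ℕ)
    (hm : ∀ a b : ℕ, 1 ≤ a → a ≤ b → lam b ≤ lam a) (f : ℕ → ℕ → ℤ) :
    ∑ i ∈ Icc 1 L, ∑ j ∈ Icc 1 (lam i), f i j
      = ∑ j ∈ Icc 1 (lam 1), ∑ i ∈ Icc 1 (conjP lam L j), f i j := by
  have h1 : ∀ i ∈ Icc 1 L, ∑ j ∈ Icc 1 (lam i), f i j
      = ∑ j ∈ Icc 1 (lam 1), if j ≤ lam i then f i j else 0 := by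
    intro i hi
    rw [← Finset.sum_filter]
    apply Finset.sum_congr _ (fun _ _ => rfl)
    ext j
    simp only [mem_filter, mem_Icc]
    have := hm 1 i le_rfl (mem_Icc.mp hi).1
    omega
  rw [Finset.sum_congr rfl h1, Finset.sum_comm]
  refine Finset.sum_congr rfl fun j hj => ?_
  rw [← Finset.sum_filter, conj_filter_eq lam L hm j]

lemma refl_sum (m : ℕ) :
    ∑ j ∈ Icc 1 m, ((m : ℤ) - j) = ∑ j ∈ Icc 1 m, ((j : ℤ) - 1) := by
  induction m with
  | zero => simp
  | succ n ih =>
    rw [Finset.sum_Icc_succ_top (by omega), Finset.sum_Icc_succ_top (by omega)]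
    have h : ∑ j ∈ Icc 1 n, ((n + 1 : ℕ) - (j:ℤ)) =
        (∑ j ∈ Icc 1 n, ((n : ℤ) - j)) + n :=
      calc ∑ j ∈ Icc 1 n, ((n + 1 : ℕ) - (j:ℤ))
          = ∑ j ∈ Icc 1 n, (((n : ℤ) - j) + 1) :=
            Finset.sum_congr rfl (fun j _ => by push_cast; ring)
        _ = (∑ j ∈ Icc 1 n, ((n : ℤ) - j)) + ∑ _j ∈ Icc 1 n, (1:ℤ) :=
            Finset.sum_add_distrib
        _ = _ := by simp [Nat.card_Icc]
    rw [h, ih]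
    push_cast
    ring

lemma lemA (lam : ℕ → ℕ) (L : ℕ)
    (hm : ∀ a b : ℕ, 1 ≤ a → a ≤ b → lam b ≤ lam a) :
    ∑ i ∈ Icc 1 L, ∑ j ∈ Icc 1 (lam i), ((lam i : ℤ) - j + 1)
      = (nconj lam L : ℤ) + (sizeP lam L : ℤ) := by
  have h1 : ∀ i : ℕ, ∑ j ∈ Icc 1 (lam i), ((lam i : ℤ) - j + 1)
      = ∑ j ∈ Icc 1 (lam i), (j : ℤ) := by
    intro i
    calc ∑ j ∈ Icc 1 (lam i), ((lam i : ℤ) - j + 1)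
        = (∑ j ∈ Icc 1 (lam i), ((lam i : ℤ) - j)) + ∑ _j ∈ Icc 1 (lam i), (1:ℤ) :=
          Finset.sum_add_distrib
      _ = (∑ j ∈ Icc 1 (lam i), ((j : ℤ) - 1)) + ∑ _j ∈ Icc 1 (lam i), (1:ℤ) := by
          rw [refl_sum]
      _ = ∑ j ∈ Icc 1 (lam i), (((j:ℤ) - 1) + 1) := Finset.sum_add_distrib.symm
      _ = ∑ j ∈ Icc 1 (lam i), (j : ℤ) :=
          Finset.sum_congr rfl (fun j _ => by ring)
  have hsize : (sizeP lam L : ℤ) = ∑ j ∈ Icc 1 (lam 1), (conjP lam L j : ℤ) := by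
    rw [sizeP]
    push_cast
    have h2 : ∀ i ∈ Icc 1 L, (lam i : ℤ) = ∑ _j ∈ Icc 1 (lam i), (1:ℤ) := by
      intro i _; simp [Nat.card_Icc]
    rw [Finset.sum_congr rfl h2, swap_sum lam L hm (fun _ _ => (1:ℤ))]
    simp [Nat.card_Icc]
  rw [Finset.sum_congr rfl (fun i _ => h1 i), swap_sum lam L hm (fun _ j => (j:ℤ)),
    nconj, hsize]
  push_cast
  rw [← Finset.sum_add_distrib]
  refine Finset.sum_congr rfl fun j hj => ?_
  have hj1 : 1 ≤ j := (mem_Icc.mp hj).1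
  rw [Finset.sum_const, Nat.card_Icc, Nat.add_sub_cancel, nsmul_eq_mul,
    Nat.cast_sub hj1]
  push_cast
  ring

lemma lemB (lam : ℕ → ℕ) (L : ℕ)
    (hm : ∀ a b : ℕ, 1 ≤ a → a ≤ b → lam b ≤ lam a) :
    ∑ i ∈ Icc 1 L, ∑ j ∈ Icc 1 (lam i), ((conjP lam L j : ℤ) - i)
      = (nP lam L : ℤ) := by
  rw [swap_sum lam L hm (fun i j => (conjP lam L j : ℤ) - i),
    Finset.sum_congr rfl (fun j _ => refl_sum (conjP lam L j)),
    ← swap_sum lam L hm (fun i _ => (i:ℤ) - 1), nP]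
  push_cast
  refine Finset.sum_congr rfl fun i hi => ?_
  have hi1 : 1 ≤ i := (mem_Icc.mp hi).1
  rw [Finset.sum_const, Nat.card_Icc, Nat.add_sub_cancel, nsmul_eq_mul,
    Nat.cast_sub hi1]
  push_cast
  ring

theorem stmt12 {K : Type*} [Field K] (q t : K) (hq : q ≠ 0) (ht : t ≠ 0)
    (lam : ℕ → ℕ) (L : ℕ)
    (hmono : ∀ k, 1 ≤ k → lam (k + 1) ≤ lam k)
    (hL : ∀ k, L < k → lam k = 0) :
    cP q t lam L * cP' q t lam L =
      (-1 : K) ^ sizeP lam L * q ^ (nconj lam L + sizeP lam L) * t ^ nP lam L *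
        Nek q t lam lam L 1 := by
  have hm : ∀ a b : ℕ, 1 ≤ a → a ≤ b → lam b ≤ lam a := by
    intro a b ha hab
    induction b, hab using Nat.le_induction with
    | base => exact le_rfl
    | succ n hn ih => exact le_trans (hmono n (le_trans ha hn)) ih
  have key : ∀ i j : ℕ,
      (1 - q ^ ((lam i : ℤ) - (j:ℤ) + 1) * t ^ ((conjP lam L j : ℤ) - (i:ℤ)))
        = ((-1 : K) * (q ^ ((lam i : ℤ) - (j:ℤ) + 1) * t ^ ((conjP lam L j : ℤ) - (i:ℤ))))
          * (1 - q ^ (-(lam i : ℤ) + (j:ℤ) - 1) * t ^ (-(conjP lam L j : ℤ) + (i:ℤ))) := by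
    intro i j
    have e1 : (-(lam i : ℤ) + (j:ℤ) - 1) = -((lam i : ℤ) - (j:ℤ) + 1) := by ring
    have e2 : (-(conjP lam L j : ℤ) + (i:ℤ)) = -((conjP lam L j : ℤ) - (i:ℤ)) := by ring
    rw [e1, e2, zpow_neg, zpow_neg]
    have hq1 : q ^ ((lam i : ℤ) - (j:ℤ) + 1) ≠ 0 := zpow_ne_zero _ hq
    have ht1 : t ^ ((conjP lam L j : ℤ) - (i:ℤ)) ≠ 0 := zpow_ne_zero _ ht
    field_simp
    ring
  have h_neg : ∏ i ∈ Icc 1 L, ∏ _j ∈ Icc 1 (lam i), (-1 : K)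
      = (-1 : K) ^ sizeP lam L := by
    rw [sizeP, ← Finset.prod_pow_eq_pow_sum]
    exact Finset.prod_congr rfl fun i _ => by simp [Nat.card_Icc]
  have h_q : ∏ i ∈ Icc 1 L, ∏ j ∈ Icc 1 (lam i), q ^ ((lam i : ℤ) - (j:ℤ) + 1)
      = q ^ (nconj lam L + sizeP lam L) := by
    rw [Finset.prod_congr rfl (fun i _ => prod_zpow_sum q hq _ _), prod_zpow_sum q hq,
      lemA lam L hm, show (nconj lam L : ℤ) + (sizeP lam L : ℤ)
        = ((nconj lam L + sizeP lam L : ℕ) : ℤ) by push_cast; ring, zpow_natCast]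
  have h_t : ∏ i ∈ Icc 1 L, ∏ j ∈ Icc 1 (lam i), t ^ ((conjP lam L j : ℤ) - (i:ℤ))
      = t ^ nP lam L := by
    rw [Finset.prod_congr rfl (fun i _ => prod_zpow_sum t ht _ _), prod_zpow_sum t ht,
      lemB lam L hm, zpow_natCast]
  simp only [Nek, one_mul]
  rw [cP', cP,
    Finset.prod_congr rfl (fun i _ => Finset.prod_congr rfl (fun j _ => key i j))]
  simp only [Finset.prod_mul_distrib]
  rw [h_neg, h_q, h_t]
  ring

end
end
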